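/- arXiv:1509.06262 — 4 statements merged into one kernel-verified Lean document; each statement's English description precedes it below -/
import Mathlib

section
/- Let A be a closed operator on a Hilbert space H and S a projection on H. Suppose A+S has a bounded inverse. Then A has a bounded inverse if and only if the operator B := S - S(A+S)^{-1}S has a bounded inverse on the subspace SH, and in that case A^{-1} = (A+S)^{-1} + (A+S)^{-1} S B^{-1} S (A+S)^{-1}. -/
open ContinuousLinearMap

private lemma jn_aux_fwd {R : Type*} [Ring R] (a s ai binv : R)
    (hS : s * s = s) (h1 : (a + s) * ai = 1) (h2 : ai * (a + s) = 1)
    (hb : s * (binv * s) = binv)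
    (hb1 : (s - s * (ai * s)) * (binv * s) = s)
    (hb2 : binv * ((s - s * (ai * s)) * s) = s) :
    a * (ai + ai * (s * (binv * (s * ai)))) = 1 ∧
    (ai + ai * (s * (binv * (s * ai)))) * a = 1 := by
  have hbs : binv * s = binv := by
    conv_lhs => rw [← hb]
    rw [mul_assoc s (binv * s) s, mul_assoc binv s s, hS, hb]
  have hproj : (s - s * (ai * s)) * s = s - s * (ai * s) := by
    rw [sub_mul, mul_assoc s (ai * s) s, mul_assoc ai s s, hS]
  have key1 : (s - s * (ai * s)) * binv = s := by rw [hbs] at hb1; exact hb1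
  have key2 : binv * (s - s * (ai * s)) = s := by rw [hproj] at hb2; exact hb2
  have ha1 : a * ai = 1 - s * ai := by rw [← h1]; noncomm_ring
  have ha2 : ai * a = 1 - ai * s := by rw [← h2]; noncomm_ring
  constructor
  · calc a * (ai + ai * (s * (binv * (s * ai))))
        = a * ai + (a * ai) * (s * (binv * (s * ai))) := by noncomm_ring
      _ = (1 - s * ai) + (1 - s * ai) * (s * (binv * (s * ai))) := by rw [ha1]
      _ = 1 - s * ai + ((s - s * (ai * s)) * binv) * (s * ai) := by noncomm_ring
      _ = 1 - s * ai + s * (s * ai) := by rw [key1]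
      _ = 1 - s * ai + (s * s) * ai := by noncomm_ring
      _ = 1 := by rw [hS]; noncomm_ring
  · calc (ai + ai * (s * (binv * (s * ai)))) * a
        = ai * a + (ai * s) * (binv * (s * (ai * a))) := by noncomm_ring
      _ = (1 - ai * s) + (ai * s) * (binv * (s * (1 - ai * s))) := by rw [ha2]
      _ = 1 - ai * s + (ai * s) * (binv * (s - s * (ai * s))) := by noncomm_ring
      _ = 1 - ai * s + (ai * s) * s := by rw [key2]
      _ = 1 - ai * s + ai * (s * s) := by noncomm_ring
      _ = 1 := by rw [hS]; noncomm_ring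

private lemma jn_aux_bwd {R : Type*} [Ring R] (a s ai ainv : R)
    (hS : s * s = s) (h1 : (a + s) * ai = 1) (h2 : ai * (a + s) = 1)
    (g1 : a * ainv = 1) (g2 : ainv * a = 1) :
    s * ((s + s * (ainv * s)) * s) = s + s * (ainv * s) ∧
    (s - s * (ai * s)) * ((s + s * (ainv * s)) * s) = s ∧
    (s + s * (ainv * s)) * ((s - s * (ai * s)) * s) = s := by
  have hS2 : ∀ x : R, s * (s * x) = s * x := fun x => by rw [← mul_assoc, hS]
  have r1 : ai * (s * ainv) = ainv - ai := by
    have e : s * ainv = (a + s) * ainv - a * ainv := by noncomm_ring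
    rw [e, mul_sub, ← mul_assoc, h2, one_mul, g1, mul_one]
  have r2 : ainv * (s * ai) = ainv - ai := by
    have e : s * ai = (a + s) * ai - a * ai := by noncomm_ring
    rw [e, mul_sub, h1, mul_one, ← mul_assoc, g2, one_mul]
  have r1' : ∀ x : R, ai * (s * (ainv * x)) = ainv * x - ai * x := fun x => by
    rw [← mul_assoc s ainv x, ← mul_assoc ai (s * ainv) x, r1, sub_mul]
  have r2' : ∀ x : R, ainv * (s * (ai * x)) = ainv * x - ai * x := fun x => by
    rw [← mul_assoc s ai x, ← mul_assoc ainv (s * ai) x, r2, sub_mul]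
  refine ⟨?_, ?_, ?_⟩ <;>
    · simp only [add_mul, mul_add, sub_mul, mul_sub, mul_assoc, hS, hS2, r1', r2']
      try abel

/-- **Jensen–Nenciu inversion lemma.**
Let `A` be a (bounded, hence closed) operator on a complex Hilbert space `H` and let `S`
be a projection on `H`.  Suppose `A + S` has a bounded (two-sided) inverse `Ai`.  Set
`B := S - S (A+S)⁻¹ S`.  Then `A` has a bounded inverse if and only if `B` has a bounded
inverse on the subspace `S H` (i.e. there is a bounded operator `Binv` with
`Binv = S Binv S` that inverts `B` on the range of `S`), and in that case
`A⁻¹ = (A+S)⁻¹ + (A+S)⁻¹ S B⁻¹ S (A+S)⁻¹`. -/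
theorem jensen_nenciu_inversion
    {H : Type*} [NormedAddCommGroup H] [InnerProductSpace ℂ H] [CompleteSpace H]
    (A S Ai : H →L[ℂ] H)
    (hS : S.comp S = S)
    (hAi₁ : (A + S).comp Ai = ContinuousLinearMap.id ℂ H)
    (hAi₂ : Ai.comp (A + S) = ContinuousLinearMap.id ℂ H) :
    ((∃ Ainv : H →L[ℂ] H,
        A.comp Ainv = ContinuousLinearMap.id ℂ H ∧
        Ainv.comp A = ContinuousLinearMap.id ℂ H) ↔
      (∃ Binv : H →L[ℂ] H,
        S.comp (Binv.comp S) = Binv ∧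
        (∀ x : H, (S - S.comp (Ai.comp S)) (Binv (S x)) = S x) ∧
        (∀ x : H, Binv ((S - S.comp (Ai.comp S)) (S x)) = S x))) ∧
    (∀ Binv : H →L[ℂ] H,
      S.comp (Binv.comp S) = Binv →
      (∀ x : H, (S - S.comp (Ai.comp S)) (Binv (S x)) = S x) →
      (∀ x : H, Binv ((S - S.comp (Ai.comp S)) (S x)) = S x) →
      A.comp (Ai + Ai.comp (S.comp (Binv.comp (S.comp Ai)))) = ContinuousLinearMap.id ℂ H ∧
      (Ai + Ai.comp (S.comp (Binv.comp (S.comp Ai)))).comp A = ContinuousLinearMap.id ℂ H) := by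
  have hS' : S * S = S := hS
  have h1' : (A + S) * Ai = 1 := hAi₁
  have h2' : Ai * (A + S) = 1 := hAi₂
  have main : ∀ Binv : H →L[ℂ] H,
      S.comp (Binv.comp S) = Binv →
      (∀ x : H, (S - S.comp (Ai.comp S)) (Binv (S x)) = S x) →
      (∀ x : H, Binv ((S - S.comp (Ai.comp S)) (S x)) = S x) →
      A.comp (Ai + Ai.comp (S.comp (Binv.comp (S.comp Ai)))) = ContinuousLinearMap.id ℂ H ∧
      (Ai + Ai.comp (S.comp (Binv.comp (S.comp Ai)))).comp A = ContinuousLinearMap.id ℂ H := by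
    intro Binv hb hb1 hb2
    have hb' : S * (Binv * S) = Binv := hb
    have hb1' : (S - S * (Ai * S)) * (Binv * S) = S := by
      ext x
      simpa [ContinuousLinearMap.mul_apply] using hb1 x
    have hb2' : Binv * ((S - S * (Ai * S)) * S) = S := by
      ext x
      simpa [ContinuousLinearMap.mul_apply] using hb2 x
    exact jn_aux_fwd A S Ai Binv hS' h1' h2' hb' hb1' hb2'
  refine ⟨⟨?_, ?_⟩, main⟩
  · rintro ⟨Ainv, g1, g2⟩
    have g1' : A * Ainv = 1 := g1
    have g2' : Ainv * A = 1 := g2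
    obtain ⟨e1, e2, e3⟩ := jn_aux_bwd A S Ai Ainv hS' h1' h2' g1' g2'
    refine ⟨S + S * (Ainv * S), e1, fun x => ?_, fun x => ?_⟩
    · simpa [ContinuousLinearMap.mul_apply] using DFunLike.congr_fun e2 x
    · simpa [ContinuousLinearMap.mul_apply] using DFunLike.congr_fun e3 x
  · rintro ⟨Binv, hb, hb1, hb2⟩
    exact ⟨Ai + Ai.comp (S.comp (Binv.comp (S.comp Ai))), main Binv hb hb1 hb2⟩
end

section
/- Let E : (0, ∞) → ℂ be supported in (0, λ₁] for some small λ₁ < 1/2 and satisfy |E(λ)| ≤ C (λ log λ)^{-2} and |E'(λ)| ≤ C λ^{-1}(λ log λ)^{-2} for 0 < λ < λ₁. Then for all t > 2, |∫₀^∞ e^{itλ²} λ χ(λ) E(λ) dλ| ≤ C' / log t, where χ is a smooth cutoff equal to 1 on [0, λ₁] and supported in [0, 2λ₁]. -/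
open MeasureTheory Real Complex Set intervalIntegral

/-- FTC for 1/(l log² l) on (0,b]. -/
lemma logint_aux (b : ℝ) (hb0 : 0 < b) (hb1 : b < 1) :
    IntegrableOn (fun l => (l * Real.log l ^ 2)⁻¹) (Set.Ioc 0 b) ∧
    ∫ l in Set.Ioc 0 b, (l * Real.log l ^ 2)⁻¹ = -(Real.log b)⁻¹ := by
  set G : ℝ → ℝ := fun l => -(Real.log l)⁻¹ with hG
  have hderiv : ∀ x ∈ Set.Ioo (0:ℝ) b, HasDerivAt G ((x * Real.log x ^ 2)⁻¹) x := by
    intro x hx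
    have hx0 : x ≠ 0 := ne_of_gt hx.1
    have hlog : Real.log x ≠ 0 := by
      have := Real.log_neg hx.1 (hx.2.trans hb1)
      linarith
    have h1 := ((Real.hasDerivAt_log hx0).inv hlog).neg
    refine h1.congr_deriv ?_
    field_simp
  have hcont : ContinuousOn G (Set.Icc 0 b) := by
    intro x hx
    rcases eq_or_lt_of_le hx.1 with h | h
    · -- x = 0
      subst h
      have h0 : G 0 = 0 := by simp [hG]
      have h1 : Filter.Tendsto (fun l => -Real.log l) (nhdsWithin 0 (Set.Ioi 0)) Filter.atTop :=
        Filter.tendsto_neg_atBot_atTop.comp Real.tendsto_log_nhdsGT_zero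
      have h2 : Filter.Tendsto G (nhdsWithin 0 (Set.Ioi 0)) (nhds 0) := by
        have := h1.inv_tendsto_atTop
        simpa only [hG, Pi.inv_def, inv_neg] using this
      rw [← continuousWithinAt_diff_self, ContinuousWithinAt, h0]
      exact h2.mono_left (nhdsWithin_mono _ (fun y hy => hy.1.1.lt_of_ne (Ne.symm hy.2)))
    · have hlog : Real.log x ≠ 0 := by
        have := Real.log_neg h (lt_of_le_of_lt hx.2 hb1)
        linarith
      exact ((Real.continuousAt_log (ne_of_gt h)).inv₀ hlog).neg.continuousWithinAt
  have g'pos : ∀ x ∈ Set.Ioo (0:ℝ) b, 0 ≤ (x * Real.log x ^ 2)⁻¹ := by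
    intro x hx
    exact inv_nonneg.2 (mul_nonneg hx.1.le (sq_nonneg _))
  have hint := intervalIntegral.integrableOn_deriv_of_nonneg hcont hderiv g'pos
  refine ⟨hint, ?_⟩
  have := intervalIntegral.integral_eq_sub_of_hasDeriv_right_of_le hb0.le hcont
    (fun x hx => (hderiv x hx).hasDerivWithinAt)
    ((intervalIntegrable_iff_integrableOn_Ioc_of_le hb0.le).mpr hint)
  rw [intervalIntegral.integral_of_le hb0.le] at this
  rw [this]
  simp [hG]

lemma log_le_sqrt' {t : ℝ} (ht : 1 ≤ t) : Real.log t ≤ Real.sqrt t := by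
  have h0 : (0:ℝ) < t := lt_of_lt_of_le one_pos ht
  set s := Real.sqrt (Real.sqrt t) with hs
  have hs0 : 0 < s := Real.sqrt_pos.2 (Real.sqrt_pos.2 h0)
  have h1 : Real.log s = Real.log t / 4 := by
    rw [hs, Real.log_sqrt (Real.sqrt_nonneg t), Real.log_sqrt h0.le]
    ring
  have h2 : Real.log s ≤ s - 1 := Real.log_le_sub_one_of_pos hs0
  have h3 : s ^ 2 = Real.sqrt t := Real.sq_sqrt (Real.sqrt_nonneg t)
  nlinarith [sq_nonneg (s - 2)]

lemma cube_int {a b : ℝ} (ha : 0 < a) (hab : a ≤ b) :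
    ∫ x in a..b, (x ^ 3)⁻¹ = (a ^ 2)⁻¹ / 2 - (b ^ 2)⁻¹ / 2 := by
  have huIcc : Set.uIcc a b = Set.Icc a b := Set.uIcc_of_le hab
  have hderiv : ∀ x ∈ Set.uIcc a b, HasDerivAt (fun y => -(y ^ 2)⁻¹ / 2) ((x ^ 3)⁻¹) x := by
    intro x hx
    rw [huIcc] at hx
    have hx0 : x ≠ 0 := ne_of_gt (lt_of_lt_of_le ha hx.1)
    have h1 := (((hasDerivAt_pow 2 x).inv (pow_ne_zero 2 hx0)).neg).div_const 2
    refine h1.congr_deriv ?_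
    field_simp
    ring
  have hcontint : IntervalIntegrable (fun x => (x ^ 3)⁻¹) volume a b := by
    apply ContinuousOn.intervalIntegrable
    apply ContinuousOn.inv₀ (by fun_prop)
    intro x hx
    rw [huIcc] at hx
    exact pow_ne_zero 3 (ne_of_gt (lt_of_lt_of_le ha hx.1))
  rw [intervalIntegral.integral_eq_sub_of_hasDerivAt hderiv hcontint]
  ring

lemma loginv_int {a b : ℝ} (ha : 0 < a) (hab : a ≤ b) (hb : b < 1) :
    ∫ x in a..b, (x * Real.log x ^ 2)⁻¹ = (Real.log a)⁻¹ - (Real.log b)⁻¹ := by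
  have huIcc : Set.uIcc a b = Set.Icc a b := Set.uIcc_of_le hab
  have hlog : ∀ x ∈ Set.Icc a b, Real.log x ≠ 0 := fun x hx =>
    ne_of_lt (Real.log_neg (lt_of_lt_of_le ha hx.1) (lt_of_le_of_lt hx.2 hb))
  have hderiv : ∀ x ∈ Set.uIcc a b, HasDerivAt (fun y => -(Real.log y)⁻¹)
      ((x * Real.log x ^ 2)⁻¹) x := by
    intro x hx
    rw [huIcc] at hx
    have hx0 : x ≠ 0 := ne_of_gt (lt_of_lt_of_le ha hx.1)
    have h1 := ((Real.hasDerivAt_log hx0).inv (hlog x hx)).neg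
    refine h1.congr_deriv ?_
    field_simp
  have hcontint : IntervalIntegrable (fun x => (x * Real.log x ^ 2)⁻¹) volume a b := by
    apply ContinuousOn.intervalIntegrable
    apply ContinuousOn.inv₀
    · rw [huIcc]
      exact continuousOn_id.mul
        ((Real.continuousOn_log.mono (fun x hx => ne_of_gt (lt_of_lt_of_le ha hx.1))).pow 2)
    · intro x hx
      rw [huIcc] at hx
      exact mul_ne_zero (ne_of_gt (lt_of_lt_of_le ha hx.1)) (pow_ne_zero 2 (hlog x hx))
  rw [intervalIntegral.integral_eq_sub_of_hasDerivAt hderiv hcontint]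
  ring

lemma phase_deriv (t : ℝ) (ht : t ≠ 0) (l : ℝ) :
    HasDerivAt (fun y : ℝ => Complex.exp (Complex.I * t * y ^ 2) / (2 * Complex.I * t))
      (Complex.exp (Complex.I * t * l ^ 2) * l) l := by
  have h2it : (2 : ℂ) * Complex.I * t ≠ 0 := by
    simp [Complex.ext_iff, ht]
  have hinner : HasDerivAt (fun z : ℂ => Complex.exp (Complex.I * t * z ^ 2))
      (Complex.exp (Complex.I * t * (l:ℂ) ^ 2) * (Complex.I * t * (2 * l))) (l : ℝ) := by
    have h1 : HasDerivAt (fun z : ℂ => Complex.I * t * z ^ 2)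
        (Complex.I * t * (2 * (l:ℂ))) (l:ℂ) := by
      simpa [mul_comm] using ((hasDerivAt_pow 2 (l:ℂ)).const_mul (Complex.I * t))
    simpa using h1.cexp
  have := (hinner.comp_ofReal).div_const (2 * Complex.I * t)
  refine this.congr_deriv ?_
  field_simp [Complex.ofReal_ne_zero.mpr ht]

lemma phase_norm (t l : ℝ) : ‖Complex.exp (Complex.I * t * l ^ 2)‖ = 1 := by
  rw [Complex.norm_exp]
  norm_num [Complex.mul_re, Complex.mul_im]
  right
  simp [pow_two, Complex.mul_im]

lemma key_pt {t lam1 x : ℝ} (ht : 2 < t) (hlam1 : lam1 < 1)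
    (hx0 : (Real.sqrt t)⁻¹ ≤ x) (hx1 : x < lam1) (hxpos : 0 < x) :
    (x * (x * Real.log x) ^ 2)⁻¹ ≤
      16 / Real.log t ^ 2 * (x ^ 3)⁻¹ + Real.sqrt t * (x * Real.log x ^ 2)⁻¹ := by
  have ht0 : (0:ℝ) < t := by linarith
  have hst : 0 < Real.sqrt t := Real.sqrt_pos.2 ht0
  have hlt : 0 < Real.log t := Real.log_pos (by linarith)
  have hltx : Real.log x < 0 := Real.log_neg hxpos (lt_trans hx1 hlam1)
  have hlx2 : 0 < Real.log x ^ 2 := by nlinarith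
  have heq : x * (x * Real.log x) ^ 2 = x ^ 3 * Real.log x ^ 2 := by ring
  rw [heq]
  set r := (Real.sqrt (Real.sqrt t))⁻¹ with hr
  have hsst : 0 < Real.sqrt (Real.sqrt t) := Real.sqrt_pos.2 hst
  have hr0 : 0 < r := inv_pos.2 hsst
  have hlogr : Real.log r = -(Real.log t / 4) := by
    rw [hr, Real.log_inv, Real.log_sqrt hst.le, Real.log_sqrt ht0.le]
    ring
  rcases le_or_gt x r with hxr | hxr
  · -- small x : log² x ≥ (log t)²/16
    have hlx : Real.log x ≤ -(Real.log t / 4) := by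
      rw [← hlogr]; exact Real.log_le_log hxpos hxr
    have h16 : Real.log t ^ 2 / 16 ≤ Real.log x ^ 2 := by nlinarith
    have h1 : (x ^ 3 * Real.log x ^ 2)⁻¹ ≤ 16 / Real.log t ^ 2 * (x ^ 3)⁻¹ := by
      have key : x ^ 3 * (Real.log t ^ 2 / 16) ≤ x ^ 3 * Real.log x ^ 2 :=
        mul_le_mul_of_nonneg_left h16 (le_of_lt (pow_pos hxpos 3))
      have h1' := inv_anti₀ (mul_pos (pow_pos hxpos 3) (div_pos (pow_pos hlt 2) (by norm_num))) key
      have heq3 : (x ^ 3 * (Real.log t ^ 2 / 16))⁻¹ = 16 / Real.log t ^ 2 * (x ^ 3)⁻¹ := by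
        field_simp
      rw [heq3] at h1'
      exact h1'
    have h2 : 0 ≤ Real.sqrt t * (x * Real.log x ^ 2)⁻¹ := by positivity
    linarith
  · -- large x : x² ≥ (√t)⁻¹
    have hx2 : (Real.sqrt t)⁻¹ ≤ x ^ 2 := by
      have : r ^ 2 = (Real.sqrt t)⁻¹ := by
        rw [hr, inv_pow, Real.sq_sqrt hst.le]
      rw [← this]
      nlinarith
    have h1 : (x ^ 3 * Real.log x ^ 2)⁻¹ ≤ Real.sqrt t * (x * Real.log x ^ 2)⁻¹ := by
      have heq2 : x ^ 3 * Real.log x ^ 2 = x ^ 2 * (x * Real.log x ^ 2) := by ring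
      rw [heq2, mul_inv]
      have hxx : (x ^ 2)⁻¹ ≤ Real.sqrt t := by
        have := inv_anti₀ (by positivity : (0:ℝ) < (Real.sqrt t)⁻¹) hx2
        rwa [inv_inv] at this
      exact mul_le_mul_of_nonneg_right hxx (by positivity)
    have h2 : 0 ≤ 16 / Real.log t ^ 2 * (x ^ 3)⁻¹ := by positivity
    linarith

lemma key_pt2 {t lam1 c : ℝ} (ht : 2 < t) (hlam1p : 0 < lam1) (hlam1 : lam1 < 1)
    (hc0 : (Real.sqrt t)⁻¹ ≤ c) (hc1 : c < lam1) (hcpos : 0 < c) :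
    ((c * Real.log c) ^ 2)⁻¹ ≤
      16 * t / Real.log t ^ 2 + Real.sqrt t / Real.log lam1 ^ 2 := by
  have ht0 : (0:ℝ) < t := by linarith
  have hst : 0 < Real.sqrt t := Real.sqrt_pos.2 ht0
  have hlt : 0 < Real.log t := Real.log_pos (by linarith)
  have hltc : Real.log c < 0 := Real.log_neg hcpos (lt_trans hc1 hlam1)
  have hltlam : Real.log lam1 < 0 := Real.log_neg hlam1p hlam1
  have hlc2 : 0 < Real.log c ^ 2 := by nlinarith
  have heq : (c * Real.log c) ^ 2 = c ^ 2 * Real.log c ^ 2 := by ring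
  rw [heq]
  have hc2 : t⁻¹ ≤ c ^ 2 := by
    have h1 : (Real.sqrt t)⁻¹ ^ 2 = t⁻¹ := by
      rw [inv_pow, Real.sq_sqrt ht0.le]
    rw [← h1]
    nlinarith [inv_pos.2 hst]
  set r := (Real.sqrt (Real.sqrt t))⁻¹ with hr
  have hsst : 0 < Real.sqrt (Real.sqrt t) := Real.sqrt_pos.2 hst
  have hr0 : 0 < r := inv_pos.2 hsst
  have hlogr : Real.log r = -(Real.log t / 4) := by
    rw [hr, Real.log_inv, Real.log_sqrt hst.le, Real.log_sqrt ht0.le]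
    ring
  rcases le_or_gt c r with hcr | hcr
  · have hlc : Real.log c ≤ -(Real.log t / 4) := by
      rw [← hlogr]; exact Real.log_le_log hcpos hcr
    have h16 : Real.log t ^ 2 / 16 ≤ Real.log c ^ 2 := by nlinarith
    have key : t⁻¹ * (Real.log t ^ 2 / 16) ≤ c ^ 2 * Real.log c ^ 2 := by
      have h1 : t⁻¹ * (Real.log t ^ 2 / 16) ≤ c ^ 2 * (Real.log t ^ 2 / 16) :=
        mul_le_mul_of_nonneg_right hc2 (by positivity)
      have h2 : c ^ 2 * (Real.log t ^ 2 / 16) ≤ c ^ 2 * Real.log c ^ 2 :=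
        mul_le_mul_of_nonneg_left h16 (by positivity)
      linarith
    have h1' := inv_anti₀ (mul_pos (inv_pos.2 ht0) (div_pos (pow_pos hlt 2) (by norm_num))) key
    have heq3 : (t⁻¹ * (Real.log t ^ 2 / 16))⁻¹ = 16 * t / Real.log t ^ 2 := by
      field_simp
    rw [heq3] at h1'
    have h2 : 0 ≤ Real.sqrt t / Real.log lam1 ^ 2 := by positivity
    linarith
  · have hcr2 : (Real.sqrt t)⁻¹ ≤ c ^ 2 := by
      have : r ^ 2 = (Real.sqrt t)⁻¹ := by
        rw [hr, inv_pow, Real.sq_sqrt hst.le]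
      rw [← this]
      nlinarith
    have hlc : Real.log c < Real.log lam1 := Real.log_lt_log hcpos hc1
    have hlc2' : Real.log lam1 ^ 2 ≤ Real.log c ^ 2 := by nlinarith
    have key : (Real.sqrt t)⁻¹ * Real.log lam1 ^ 2 ≤ c ^ 2 * Real.log c ^ 2 := by
      have h1 : (Real.sqrt t)⁻¹ * Real.log lam1 ^ 2 ≤ c ^ 2 * Real.log lam1 ^ 2 :=
        mul_le_mul_of_nonneg_right hcr2 (by positivity)
      have h2 : c ^ 2 * Real.log lam1 ^ 2 ≤ c ^ 2 * Real.log c ^ 2 :=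
        mul_le_mul_of_nonneg_left hlc2' (by positivity)
      linarith
    have hlam2 : 0 < Real.log lam1 ^ 2 := by nlinarith
    have h1' := inv_anti₀ (mul_pos (inv_pos.2 hst) hlam2) key
    have heq3 : ((Real.sqrt t)⁻¹ * Real.log lam1 ^ 2)⁻¹ = Real.sqrt t / Real.log lam1 ^ 2 := by
      field_simp
    rw [heq3] at h1'
    have h2 : 0 ≤ 16 * t / Real.log t ^ 2 := by positivity
    linarith


set_option maxHeartbeats 4000000

/-- If `E` is supported in `(0, λ₁]` with `|E(λ)| ≤ C (λ log λ)⁻²` and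
`|E'(λ)| ≤ C λ⁻¹ (λ log λ)⁻²`, then for `t > 2`,
`|∫₀^∞ e^{itλ²} λ χ(λ) E(λ) dλ| ≲ 1 / log t`, where `χ` is a smooth even cutoff
equal to `1` on `[-λ₁, λ₁]` and supported in `[-2λ₁, 2λ₁]`. -/
theorem log_decay_oscillatory
    (lam1 : ℝ) (hlam1 : 0 < lam1) (hlam1' : lam1 < 1 / 2)
    (χ : ℝ → ℝ) (hχ : ContDiff ℝ (⊤ : ℕ∞) χ)
    (hχsupp : Function.support χ ⊆ Set.Icc (-(2 * lam1)) (2 * lam1))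
    (hχone : ∀ x ∈ Set.Icc (-lam1) lam1, χ x = 1)
    (E : ℝ → ℂ) (C : ℝ)
    (hEsupp : ∀ l : ℝ, lam1 < l → E l = 0)
    (hEdiff : ∀ l ∈ Set.Ioo (0 : ℝ) lam1, DifferentiableAt ℝ E l)
    (hE0 : ∀ l : ℝ, 0 < l → l < lam1 → ‖E l‖ ≤ C / (l * Real.log l) ^ 2)
    (hE1 : ∀ l : ℝ, 0 < l → l < lam1 →
      ‖deriv E l‖ ≤ C / (l * (l * Real.log l) ^ 2)) :
    ∃ C' : ℝ, ∀ t : ℝ, 2 < t →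
      ‖∫ l in Set.Ioi (0 : ℝ),
          Complex.exp (Complex.I * t * l ^ 2) * (l : ℂ) * (χ l : ℂ) * E l‖ ≤
        C' / Real.log t := by
  have hlam1lt1 : lam1 < 1 := by linarith
  have hloglam1 : Real.log lam1 < 0 := Real.log_neg hlam1 hlam1lt1
  set L : ℝ := -Real.log lam1 with hLdef
  have hL : 0 < L := by rw [hLdef]; linarith
  have hlog2 : (0:ℝ) < Real.log 2 := Real.log_pos (by norm_num)
  have hC : 0 ≤ C := by
    have h := hE0 (lam1/2) (by linarith) (by linarith)
    have hlneg : Real.log (lam1/2) < 0 := Real.log_neg (by linarith) (by linarith)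
    have hne : lam1/2 * Real.log (lam1/2) ≠ 0 :=
      mul_ne_zero (by linarith) (by linarith)
    have hpos : 0 < (lam1/2 * Real.log (lam1/2))^2 := by positivity
    have h0 : 0 ≤ C / (lam1/2 * Real.log (lam1/2))^2 := le_trans (norm_nonneg _) h
    rcases div_nonneg_iff.mp h0 with ⟨h1,_⟩|⟨_,h2⟩
    · exact h1
    · linarith
  refine ⟨C * (4 + 14 / Real.log 2 + 1 / (2 * L ^ 2) + 1 / (2 * L)), ?_⟩
  intro t ht
  have ht0 : (0:ℝ) < t := by linarith
  have hlt : 0 < Real.log t := Real.log_pos (by linarith)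
  have hltlog2 : Real.log 2 ≤ Real.log t := Real.log_le_log (by norm_num) ht.le
  set s : ℝ := Real.sqrt t with hsdef
  have hs0 : 0 < s := Real.sqrt_pos.2 ht0
  have hss : s * s = t := Real.mul_self_sqrt ht0.le
  have hs1 : 1 < s := by nlinarith
  have hsqlt : Real.log t ≤ s := log_le_sqrt' (by linarith)
  have htlog : Real.log t ≤ t := by linarith [Real.log_le_sub_one_of_pos ht0]
  set a : ℝ := s⁻¹ with hadef
  have ha0 : 0 < a := inv_pos.2 hs0
  have ha1 : a < 1 := by
    rw [hadef]
    exact inv_lt_one_of_one_lt₀ hs1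
  have hloga : Real.log a = -(Real.log t / 2) := by
    rw [hadef, Real.log_inv, hsdef, Real.log_sqrt ht0.le]
  set F : ℝ → ℂ := fun l =>
    Complex.exp (Complex.I * t * l ^ 2) * (l : ℂ) * (χ l : ℂ) * E l with hFdef
  -- continuity of F on (0, lam1)
  have hEcont : ContinuousOn E (Set.Ioo 0 lam1) := fun l hl =>
    (hEdiff l hl).continuousAt.continuousWithinAt
  have hFcont : ContinuousOn F (Set.Ioo 0 lam1) := by
    apply ContinuousOn.mul _ hEcont
    exact (((Complex.continuous_exp.comp (continuous_const.mul
      (Complex.continuous_ofReal.pow 2))).mul Complex.continuous_ofReal).mul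
      (Complex.continuous_ofReal.comp (hχ.continuous))).continuousOn
  -- pointwise bound for F
  have hnormF : ∀ l ∈ Set.Ioo (0:ℝ) lam1, ‖F l‖ ≤ C * (l * Real.log l ^ 2)⁻¹ := by
    intro l hl
    have hl0 := hl.1
    have hll := hl.2
    have hlog : Real.log l < 0 := Real.log_neg hl0 (lt_trans hll hlam1lt1)
    have hχl : χ l = 1 := hχone l ⟨by linarith, hll.le⟩
    have hEl := hE0 l hl0 hll
    have hFn : ‖F l‖ = l * ‖E l‖ := by
      rw [hFdef]
      simp only [norm_mul, phase_norm, hχl, Complex.norm_real, abs_one, one_mul, mul_one,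
        Real.norm_eq_abs, abs_of_pos hl0]
    rw [hFn]
    calc l * ‖E l‖ ≤ l * (C / (l * Real.log l) ^ 2) :=
          mul_le_mul_of_nonneg_left hEl hl0.le
      _ = C * (l * Real.log l ^ 2)⁻¹ := by
          field_simp [hl0.ne', hlog.ne]
  -- integrability of the dominating function
  obtain ⟨hgint, hgval⟩ := logint_aux lam1 hlam1 hlam1lt1
  -- integrability of F
  have hFint : IntegrableOn F (Set.Ioc 0 lam1) := by
    rw [IntegrableOn, ← Measure.restrict_congr_set MeasureTheory.Ioo_ae_eq_Ioc]
    refine Integrable.mono' ((hgint.mono_set Set.Ioo_subset_Ioc_self).const_mul C)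
      (hFcont.aestronglyMeasurable measurableSet_Ioo) ?_
    exact (ae_restrict_mem measurableSet_Ioo).mono fun l hl => hnormF l hl
  -- norm bound for integrals over initial pieces
  have hbound : ∀ b, 0 < b → b ≤ lam1 →
      ‖∫ l in Set.Ioc 0 b, F l‖ ≤ C * (-(Real.log b)⁻¹) := by
    intro b hb0 hb1
    obtain ⟨hgintb, hgvalb⟩ := logint_aux b hb0 (lt_of_le_of_lt hb1 hlam1lt1)
    have hae : ∀ᵐ l ∂(volume.restrict (Set.Ioc 0 b)), l ∈ Set.Ioo 0 b := by
      rw [← Measure.restrict_congr_set MeasureTheory.Ioo_ae_eq_Ioc]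
      exact ae_restrict_mem measurableSet_Ioo
    have h1 : ‖∫ l in Set.Ioc 0 b, F l‖ ≤ ∫ l in Set.Ioc 0 b, C * (l * Real.log l ^ 2)⁻¹ := by
      refine norm_integral_le_of_norm_le (hgintb.const_mul C) ?_
      exact hae.mono fun l hl => hnormF l ⟨hl.1, lt_of_lt_of_le hl.2 hb1⟩
    rw [MeasureTheory.integral_const_mul, hgvalb] at h1
    exact h1
  -- reduce Ioi 0 to Ioc 0 lam1
  have hIoi : (∫ l in Set.Ioi (0:ℝ), F l) = ∫ l in Set.Ioc 0 lam1, F l := by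
    have hzero : Set.EqOn F 0 (Set.Ioi lam1) := fun l hl => by
      rw [hFdef]
      simp [hEsupp l hl]
    have hint2 : IntegrableOn F (Set.Ioi lam1) := by
      rw [integrableOn_congr_fun hzero measurableSet_Ioi]
      exact integrableOn_zero
    rw [← Set.Ioc_union_Ioi_eq_Ioi hlam1.le,
      setIntegral_union (Set.Ioc_disjoint_Ioi le_rfl) measurableSet_Ioi hFint hint2,
      setIntegral_congr_fun measurableSet_Ioi hzero]
    simp
  clear_value F s a L
  show ‖∫ l in Set.Ioi (0:ℝ), F l‖ ≤ _
  rw [hIoi]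
  rcases le_or_gt lam1 a with hcase | hcase
  · -- case A : t small
    have h1 := hbound lam1 hlam1 le_rfl
    have hlt2L : Real.log t ≤ 2 * L := by
      rw [hadef] at hcase
      have h2 : s ≤ lam1⁻¹ := by
        rw [← inv_inv s]
        exact inv_anti₀ hlam1 hcase
      have h3 : Real.log s ≤ Real.log lam1⁻¹ := Real.log_le_log hs0 h2
      rw [Real.log_inv] at h3
      rw [hsdef, Real.log_sqrt ht0.le] at h3
      linarith
    have h4 : C * (-(Real.log lam1)⁻¹) = C / L := by
      rw [hLdef]
      rw [div_eq_mul_inv, neg_inv]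
    rw [h4] at h1
    refine le_trans h1 ?_
    rw [div_le_div_iff₀ hL hlt]
    have hq : 0 ≤ 14 / Real.log 2 + 1 / (2 * L ^ 2) + 1 / (2 * L) := by
      have q1 : (0:ℝ) ≤ 14 / Real.log 2 := div_nonneg (by norm_num) hlog2.le
      have q2 : (0:ℝ) ≤ 1 / (2 * L ^ 2) := div_nonneg (by norm_num) (by nlinarith)
      have q3 : (0:ℝ) ≤ 1 / (2 * L) := div_nonneg (by norm_num) (by linarith)
      linarith
    nlinarith [mul_le_mul_of_nonneg_left hlt2L hC, mul_nonneg (mul_nonneg hC hq) hL.le]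
  · -- case B : t large
    have halam : a < lam1 := hcase
    have hlamne : Real.log lam1 ≠ 0 := ne_of_lt hloglam1
    have hltne : Real.log t ≠ 0 := ne_of_gt hlt
    have hLne : L ≠ 0 := ne_of_gt hL
    have h2t : (0:ℝ) < (2 * t)⁻¹ := inv_pos.2 (by linarith)
    have ha2t : a ^ 2 = t⁻¹ := by
      rw [hadef, ← hss, inv_pow]
      congr 1
      ring
    -- the phase antiderivative
    set φ : ℝ → ℂ := fun y => Complex.exp (Complex.I * t * y ^ 2) / (2 * Complex.I * t)
      with hφdef
    have hφnorm : ∀ y : ℝ, ‖φ y‖ = (2 * t)⁻¹ := by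
      intro y
      rw [hφdef]
      simp only []
      rw [norm_div, phase_norm]
      have h2it : ‖(2 * Complex.I * (t:ℂ))‖ = 2 * t := by
        simp [norm_mul, Complex.norm_real, Real.norm_eq_abs, abs_of_pos ht0]
      rw [h2it, one_div]
    have hφcont : Continuous φ := by
      rw [hφdef]
      exact (Complex.continuous_exp.comp (continuous_const.mul
        (Complex.continuous_ofReal.pow 2))).div_const _
    clear_value φ
    -- dominating function for the derivative term
    set k1 : ℝ := (2 * t)⁻¹ * C * (16 / Real.log t ^ 2) with hk1def
    set k2 : ℝ := (2 * t)⁻¹ * C * s with hk2def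
    have hk1 : 0 ≤ k1 := by
      rw [hk1def]
      exact mul_nonneg (mul_nonneg h2t.le hC) (div_nonneg (by norm_num) (sq_nonneg _))
    have hk2 : 0 ≤ k2 := by
      rw [hk2def]
      exact mul_nonneg (mul_nonneg h2t.le hC) hs0.le
    clear_value k1 k2
    set D : ℝ → ℝ := fun x => k1 * (x ^ 3)⁻¹ + k2 * (x * Real.log x ^ 2)⁻¹ with hDdef
    have hDcont : ContinuousOn D (Set.Icc a lam1) := by
      rw [hDdef]
      apply ContinuousOn.add
      · exact continuousOn_const.mul (ContinuousOn.inv₀ (by fun_prop)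
          (fun x hx => pow_ne_zero 3 (ne_of_gt (lt_of_lt_of_le ha0 hx.1))))
      · refine continuousOn_const.mul (ContinuousOn.inv₀ ?_ ?_)
        · exact continuousOn_id.mul ((Real.continuousOn_log.mono
            (fun x hx => ne_of_gt (lt_of_lt_of_le ha0 hx.1))).pow 2)
        · intro x hx
          have hx0 : 0 < x := lt_of_lt_of_le ha0 hx.1
          have hlx : Real.log x < 0 := Real.log_neg hx0 (lt_of_le_of_lt hx.2 hlam1lt1)
          exact mul_ne_zero (ne_of_gt hx0) (pow_ne_zero 2 (ne_of_lt hlx))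
    have hDnonneg : ∀ x ∈ Set.Icc a lam1, 0 ≤ D x := by
      intro x hx
      have hx0 : 0 < x := lt_of_lt_of_le ha0 hx.1
      rw [hDdef]
      have h1 : (0:ℝ) ≤ (x ^ 3)⁻¹ := by positivity
      have h2 : (0:ℝ) ≤ (x * Real.log x ^ 2)⁻¹ := by positivity
      have := mul_nonneg hk1 h1
      have := mul_nonneg hk2 h2
      dsimp only
      linarith
    clear_value D
    have hDint : ∀ u v : ℝ, Set.uIcc u v ⊆ Set.Icc a lam1 →
        IntervalIntegrable D volume u v := fun u v h =>
      (hDcont.mono h).intervalIntegrable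
    -- value of the integral of D
    have hDval : ∫ x in a..lam1, D x ≤ 4 * C / Real.log t ^ 2 + C / (2 * s * L) := by
      have hint1 : IntervalIntegrable (fun x => (x ^ 3)⁻¹) volume a lam1 := by
        apply ContinuousOn.intervalIntegrable
        rw [Set.uIcc_of_le halam.le]
        exact ContinuousOn.inv₀ (by fun_prop)
          (fun x hx => pow_ne_zero 3 (ne_of_gt (lt_of_lt_of_le ha0 hx.1)))
      have hint2 : IntervalIntegrable (fun x => (x * Real.log x ^ 2)⁻¹) volume a lam1 := by
        apply ContinuousOn.intervalIntegrable
        rw [Set.uIcc_of_le halam.le]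
        refine ContinuousOn.inv₀ ?_ ?_
        · exact continuousOn_id.mul ((Real.continuousOn_log.mono
            (fun x hx => ne_of_gt (lt_of_lt_of_le ha0 hx.1))).pow 2)
        · intro x hx
          have hx0 : 0 < x := lt_of_lt_of_le ha0 hx.1
          have hlx : Real.log x < 0 := Real.log_neg hx0 (lt_of_le_of_lt hx.2 hlam1lt1)
          exact mul_ne_zero (ne_of_gt hx0) (pow_ne_zero 2 (ne_of_lt hlx))
      rw [hDdef]
      rw [intervalIntegral.integral_add (hint1.const_mul k1) (hint2.const_mul k2),
        intervalIntegral.integral_const_mul, intervalIntegral.integral_const_mul,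
        cube_int ha0 halam.le, loginv_int ha0 halam.le hlam1lt1]
      have e1 : (a ^ 2)⁻¹ = t := by rw [ha2t, inv_inv]
      have e2 : (Real.log a)⁻¹ = -(2 / Real.log t) := by
        rw [hloga, inv_neg, inv_div]
      have e3 : (Real.log lam1)⁻¹ = -(L⁻¹) := by
        rw [hLdef, inv_neg, neg_neg]
      rw [e1, e2, e3]
      have hlam2 : 0 ≤ (lam1 ^ 2)⁻¹ / 2 := by positivity
      have h2lt : 0 ≤ 2 / Real.log t := div_nonneg (by norm_num) hlt.le
      have h1 : k1 * (t / 2 - (lam1 ^ 2)⁻¹ / 2) ≤ k1 * (t / 2) :=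
        mul_le_mul_of_nonneg_left (sub_le_self _ hlam2) hk1
      have h2 : k2 * (-(2 / Real.log t) - -L⁻¹) ≤ k2 * L⁻¹ :=
        mul_le_mul_of_nonneg_left (by linarith) hk2
      have hk1t : k1 * (t / 2) = 4 * C / Real.log t ^ 2 := by
        rw [hk1def]
        field_simp
        ring
      have hk2L : k2 * L⁻¹ = C / (2 * s * L) := by
        rw [hk2def, ← hss, eq_div_iff (by positivity : (0:ℝ) < 2 * s * L).ne']
        field_simp
      linarith
    -- uniform bound on partial integrals
    have hPc : ∀ c ∈ Set.Ioo a lam1, ‖∫ x in a..c, F x‖ ≤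
        14 * C / Real.log t ^ 2 + C / (2 * s * L ^ 2) + C / (2 * s * L) := by
      intro c hc
      have hca : a ≤ c := hc.1.le
      have hc0 : 0 < c := lt_trans ha0 hc.1
      have hclam : c < lam1 := hc.2
      have huIcc : Set.uIcc a c = Set.Icc a c := Set.uIcc_of_le hca
      have hsub : Set.Icc a c ⊆ Set.Ioo 0 lam1 := fun x hx =>
        ⟨lt_of_lt_of_le ha0 hx.1, lt_of_le_of_lt hx.2 hclam⟩
      have hcongr : (∫ x in a..c, F x) =
          ∫ x in a..c, E x * (Complex.exp (Complex.I * t * x ^ 2) * x) := by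
        apply intervalIntegral.integral_congr
        intro x hx
        rw [huIcc] at hx
        have hxm := hsub hx
        have hχx : χ x = 1 := hχone x ⟨by linarith [hxm.1], hxm.2.le⟩
        rw [hFdef]
        simp only [hχx, Complex.ofReal_one]
        ring
      have hEd : ∀ x ∈ Set.uIcc a c, HasDerivAt E (deriv E x) x := fun x hx =>
        (hEdiff x (hsub (huIcc ▸ hx))).hasDerivAt
      have hvd : ∀ x ∈ Set.uIcc a c,
          HasDerivAt φ (Complex.exp (Complex.I * t * x ^ 2) * x) x := by
        intro x _
        rw [hφdef]
        exact phase_deriv t (ne_of_gt ht0) x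
      have hu' : IntervalIntegrable (deriv E) volume a c := by
        rw [intervalIntegrable_iff_integrableOn_Ioc_of_le hca]
        have hgc : ContinuousOn (fun x => C / (x * (x * Real.log x) ^ 2)) (Set.Icc a c) := by
          apply ContinuousOn.div continuousOn_const
          · exact continuousOn_id.mul ((continuousOn_id.mul (Real.continuousOn_log.mono
              (fun x hx => ne_of_gt (lt_of_lt_of_le ha0 hx.1)))).pow 2)
          · intro x hx
            have hx0 : 0 < x := lt_of_lt_of_le ha0 hx.1
            have hxm := hsub hx
            have hlx : Real.log x < 0 := Real.log_neg hx0 (lt_trans hxm.2 hlam1lt1)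
            exact mul_ne_zero (ne_of_gt hx0) (pow_ne_zero 2
              (mul_ne_zero (ne_of_gt hx0) (ne_of_lt hlx)))
        refine Integrable.mono' ((hgc.integrableOn_Icc).mono_set Set.Ioc_subset_Icc_self)
          ((measurable_deriv E).aestronglyMeasurable.restrict) ?_
        refine (ae_restrict_mem measurableSet_Ioc).mono fun x hx => ?_
        have hxm := hsub (Set.Ioc_subset_Icc_self hx)
        exact hE1 x hxm.1 hxm.2
      have hv' : IntervalIntegrable
          (fun x : ℝ => Complex.exp (Complex.I * t * x ^ 2) * (x:ℂ)) volume a c :=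
        ((Complex.continuous_exp.comp (continuous_const.mul
          (Complex.continuous_ofReal.pow 2))).mul
          Complex.continuous_ofReal).intervalIntegrable _ _
      have hibp := intervalIntegral.integral_mul_deriv_eq_deriv_mul hEd hvd hu' hv'
      rw [hcongr, hibp]
      -- term at c
      have htc : ‖E c * φ c‖ ≤ 8 * C / Real.log t ^ 2 + C / (2 * s * L ^ 2) := by
        rw [norm_mul, hφnorm]
        have hax : (Real.sqrt t)⁻¹ ≤ c := by
          rw [← hsdef, ← hadef]
          exact hca
        have hkey := key_pt2 ht hlam1 hlam1lt1 hax hclam hc0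
        have hEc := hE0 c hc0 hclam
        calc ‖E c‖ * (2 * t)⁻¹ ≤ C / (c * Real.log c) ^ 2 * (2 * t)⁻¹ :=
              mul_le_mul_of_nonneg_right hEc h2t.le
          _ = (2 * t)⁻¹ * C * ((c * Real.log c) ^ 2)⁻¹ := by
              rw [div_eq_mul_inv]; ring
          _ ≤ (2 * t)⁻¹ * C * (16 * t / Real.log t ^ 2 + Real.sqrt t / Real.log lam1 ^ 2) :=
              mul_le_mul_of_nonneg_left hkey (mul_nonneg h2t.le hC)
          _ = 8 * C / Real.log t ^ 2 + C / (2 * s * L ^ 2) := by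
              rw [hLdef, neg_sq, ← hsdef, ← hss]
              field_simp
              ring
      -- term at a
      have hta : ‖E a * φ a‖ ≤ 2 * C / Real.log t ^ 2 := by
        rw [norm_mul, hφnorm]
        have hEa := hE0 a ha0 halam
        have h2 : (a * Real.log a) ^ 2 = Real.log t ^ 2 / (4 * t) := by
          rw [mul_pow, ha2t, hloga]
          field_simp
          ring
        calc ‖E a‖ * (2 * t)⁻¹ ≤ C / (a * Real.log a) ^ 2 * (2 * t)⁻¹ :=
              mul_le_mul_of_nonneg_right hEa h2t.le
          _ = 2 * C / Real.log t ^ 2 := by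
              rw [h2]
              field_simp
              ring
      -- derivative term
      have hti : ‖∫ x in a..c, deriv E x * φ x‖ ≤
          4 * C / Real.log t ^ 2 + C / (2 * s * L) := by
        have h1 : ‖∫ x in a..c, deriv E x * φ x‖ ≤ ∫ x in a..c, ‖deriv E x * φ x‖ :=
          intervalIntegral.norm_integral_le_integral_norm hca
        have hmono : (∫ x in a..c, ‖deriv E x * φ x‖) ≤ ∫ x in a..c, D x := by
          apply intervalIntegral.integral_mono_on hca
            ((hu'.mul_continuousOn hφcont.continuousOn).norm)
            (hDint a c (by rw [huIcc]; exact Set.Icc_subset_Icc le_rfl hclam.le))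
          intro x hx
          have hxm := hsub hx
          have hax : (Real.sqrt t)⁻¹ ≤ x := by
            rw [← hsdef, ← hadef]
            exact hx.1
          have hkey := key_pt ht hlam1lt1 hax hxm.2 hxm.1
          rw [norm_mul, hφnorm]
          calc ‖deriv E x‖ * (2 * t)⁻¹ ≤ C / (x * (x * Real.log x) ^ 2) * (2 * t)⁻¹ :=
                mul_le_mul_of_nonneg_right (hE1 x hxm.1 hxm.2) h2t.le
            _ = (2 * t)⁻¹ * C * (x * (x * Real.log x) ^ 2)⁻¹ := by
                rw [div_eq_mul_inv]; ring
            _ ≤ (2 * t)⁻¹ * C * (16 / Real.log t ^ 2 * (x ^ 3)⁻¹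
                  + Real.sqrt t * (x * Real.log x ^ 2)⁻¹) :=
                mul_le_mul_of_nonneg_left hkey (mul_nonneg h2t.le hC)
            _ = D x := by
                rw [hDdef, hk1def, hk2def, ← hsdef]
                ring
        have hadd := intervalIntegral.integral_add_adjacent_intervals
          (hDint a c (by rw [huIcc]; exact Set.Icc_subset_Icc le_rfl hclam.le))
          (hDint c lam1 (by rw [Set.uIcc_of_le hclam.le]; exact Set.Icc_subset_Icc hca le_rfl))
        have h2 : 0 ≤ ∫ x in c..lam1, D x :=
          intervalIntegral.integral_nonneg hclam.le
            (fun x hx => hDnonneg x ⟨le_trans hca hx.1, hx.2⟩)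
        linarith
      calc ‖E c * φ c - E a * φ a - ∫ x in a..c, deriv E x * φ x‖
          ≤ ‖E c * φ c - E a * φ a‖ + ‖∫ x in a..c, deriv E x * φ x‖ := norm_sub_le _ _
        _ ≤ ‖E c * φ c‖ + ‖E a * φ a‖ + ‖∫ x in a..c, deriv E x * φ x‖ := by
            linarith [norm_sub_le (E c * φ c) (E a * φ a)]
        _ ≤ 14 * C / Real.log t ^ 2 + C / (2 * s * L ^ 2) + C / (2 * s * L) := by
            have hre : 8 * C / Real.log t ^ 2 + C / (2 * s * L ^ 2) + 2 * C / Real.log t ^ 2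
                + (4 * C / Real.log t ^ 2 + C / (2 * s * L)) =
                14 * C / Real.log t ^ 2 + C / (2 * s * L ^ 2) + C / (2 * s * L) := by ring
            linarith
    -- pass to the limit c → lam1
    have hFI : IntervalIntegrable F volume a lam1 := by
      rw [intervalIntegrable_iff_integrableOn_Ioc_of_le halam.le]
      exact hFint.mono_set (Set.Ioc_subset_Ioc_left ha0.le)
    have hprim : ContinuousWithinAt (fun c => ∫ x in a..c, F x) (Set.Icc a lam1) lam1 := by
      apply intervalIntegral.continuousWithinAt_primitive (measure_singleton lam1)
      rw [min_self, max_eq_right halam.le]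
      exact hFI
    haveI hne : (nhdsWithin lam1 (Set.Ioo a lam1)).NeBot := by
      rw [← mem_closure_iff_nhdsWithin_neBot, closure_Ioo (ne_of_lt halam)]
      exact ⟨halam.le, le_rfl⟩
    have htend : Filter.Tendsto (fun c => ∫ x in a..c, F x)
        (nhdsWithin lam1 (Set.Ioo a lam1)) (nhds (∫ x in a..lam1, F x)) :=
      hprim.mono_left (nhdsWithin_mono _ Set.Ioo_subset_Icc_self)
    have hI2 : ‖∫ l in Set.Ioc a lam1, F l‖ ≤
        14 * C / Real.log t ^ 2 + C / (2 * s * L ^ 2) + C / (2 * s * L) := by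
      have h2 := le_of_tendsto htend.norm
        (Filter.eventually_of_mem self_mem_nhdsWithin hPc)
      rw [← intervalIntegral.integral_of_le halam.le]
      exact h2
    have hI1 : ‖∫ l in Set.Ioc 0 a, F l‖ ≤ 2 * C / Real.log t := by
      have h := hbound a ha0 halam.le
      have h2 : -(Real.log a)⁻¹ = 2 / Real.log t := by
        rw [hloga, inv_neg, neg_neg, inv_div]
      rw [h2] at h
      have h3 : C * (2 / Real.log t) = 2 * C / Real.log t := by ring
      linarith
    -- combine
    rw [← Set.Ioc_union_Ioc_eq_Ioc ha0.le halam.le,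
      setIntegral_union (Set.Ioc_disjoint_Ioc_of_le le_rfl) measurableSet_Ioc
        (hFint.mono_set (Set.Ioc_subset_Ioc_right halam.le))
        (hFint.mono_set (Set.Ioc_subset_Ioc_left ha0.le))]
    refine le_trans (norm_add_le _ _) ?_
    have e1 : 14 * C / Real.log t ^ 2 ≤ 14 * C / Real.log 2 / Real.log t := by
      rw [div_div, div_le_div_iff₀ (pow_pos hlt 2) (mul_pos hlog2 hlt)]
      nlinarith [mul_le_mul_of_nonneg_right
        (mul_le_mul_of_nonneg_left hltlog2 hC) hlt.le]
    have e2 : C / (2 * s * L ^ 2) ≤ C / (2 * L ^ 2) / Real.log t := by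
      rw [div_div, div_le_div_iff₀ (by positivity) (by positivity)]
      nlinarith [mul_le_mul_of_nonneg_right
        (mul_le_mul_of_nonneg_left hsqlt hC) (by positivity : (0:ℝ) ≤ 2 * L ^ 2)]
    have e3 : C / (2 * s * L) ≤ C / (2 * L) / Real.log t := by
      rw [div_div, div_le_div_iff₀ (by positivity) (by positivity)]
      nlinarith [mul_le_mul_of_nonneg_right
        (mul_le_mul_of_nonneg_left hsqlt hC) (by positivity : (0:ℝ) ≤ 2 * L)]
    have hnum : 2 * C + 14 * C / Real.log 2 + C / (2 * L ^ 2) + C / (2 * L) ≤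
        C * (4 + 14 / Real.log 2 + 1 / (2 * L ^ 2) + 1 / (2 * L)) := by
      have h4 : C * (4 + 14 / Real.log 2 + 1 / (2 * L ^ 2) + 1 / (2 * L)) =
          4 * C + 14 * C / Real.log 2 + C / (2 * L ^ 2) + C / (2 * L) := by
        ring
      rw [h4]
      linarith
    have efin : (2 * C + 14 * C / Real.log 2 + C / (2 * L ^ 2) + C / (2 * L)) / Real.log t ≤
        C * (4 + 14 / Real.log 2 + 1 / (2 * L ^ 2) + 1 / (2 * L)) / Real.log t := by
      rw [div_le_div_iff₀ hlt hlt]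
      exact mul_le_mul_of_nonneg_right hnum hlt.le
    have hsum : 2 * C / Real.log t + 14 * C / Real.log 2 / Real.log t
        + C / (2 * L ^ 2) / Real.log t + C / (2 * L) / Real.log t =
        (2 * C + 14 * C / Real.log 2 + C / (2 * L ^ 2) + C / (2 * L)) / Real.log t := by
      ring
    linarith
end

section
/- Fix u₁, u₂ ∈ ℝⁿ and let 0 ≤ k, ℓ < n, β > 0 with k + ℓ + β ≥ n and k + ℓ ≠ n. Then ∫_{ℝⁿ} ⟨z⟩^{-β-ε} / (|z − u₁|^k |z − u₂|^ℓ) dz ≤ C (1/|u₁ − u₂|)^{max(0, k+ℓ−n)} if |u₁ − u₂| ≤ 1, and ≤ C (1/|u₁ − u₂|)^{min(k, ℓ, k+ℓ+β−n)} if |u₁ − u₂| > 1, for any ε > 0, with C independent of u₁, u₂. -/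
/-!
Two facts do most of the work: the scaling identity
`∫_{B(u,r)} |z - u|^(-p) dz = r^(n-p) ∫_{B(0,1)} |z|^(-p) dz`, together with its analogue on
complements of balls (finite for `p < n` and `p > n` respectively), and the elementary bound
`a^(-k) b^(-ℓ) ≤ a^(-(k+ℓ)) + b^(-(k+ℓ))`.

If `k + ℓ < n`, the elementary bound reduces the integral to one-centre integrals
`∫ ⟨z⟩^(-β-ε) |z - u|^(-(k+ℓ))`, which are bounded uniformly in `u`. Otherwise, and in any case
for `|u₁ - u₂| > 1`, put `ρ = |u₁ - u₂| / 2`. On `B(u₁, ρ)` we have `|z - u₂|^(-ℓ) ≤ ρ^(-ℓ)`, on `B(u₂, ρ)` symmetrically,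
and outside both balls the elementary bound applies. For `|u₁ - u₂| ≤ 1` the weight can be
dropped, and every piece is `O(ρ^(n-k-ℓ))`. For `|u₁ - u₂| > 1` we replace the weight by the larger
`⟨z⟩^(-t)`, where `t < n` satisfies `t + k ≠ n` and `t + ℓ ≠ n` (so no logarithms appear) and
`t > n - k - ℓ + min(k, ℓ, k + ℓ + β - n)`. The `ε` leaves room for such a `t`. Every piece is then
a power of `ρ` whose exponent is at most `-min(k, ℓ, k + ℓ + β - n)`.
-/

open MeasureTheory Real Metric Set Module
open scoped ENNReal NNReal Pointwise

theorem rpow_neg_mul_rpow_neg_le_add {a b k l : ℝ} (ha : 0 < a) (hb : 0 < b) (hk : 0 ≤ k)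
    (hl : 0 ≤ l) : a ^ (-k) * b ^ (-l) ≤ a ^ (-(k + l)) + b ^ (-(k + l)) := by
  rcases le_total a b with hab | hab
  · calc a ^ (-k) * b ^ (-l) ≤ a ^ (-k) * a ^ (-l) :=
          mul_le_mul_of_nonneg_left (rpow_le_rpow_of_nonpos ha hab (by linarith)) (by positivity)
      _ = a ^ (-(k + l)) := by rw [neg_add, rpow_add ha]
      _ ≤ _ := le_add_of_nonneg_right (by positivity)
  · calc a ^ (-k) * b ^ (-l) ≤ b ^ (-k) * b ^ (-l) :=
          mul_le_mul_of_nonneg_right (rpow_le_rpow_of_nonpos hb hab (by linarith)) (by positivity)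
      _ = b ^ (-(k + l)) := by rw [neg_add, rpow_add hb]
      _ ≤ _ := le_add_of_nonneg_left (by positivity)

theorem rpow_neg_mul_rpow_neg_le_of_two_mul_le_add {a b ρ k l : ℝ} (ha : 0 ≤ a) (hb : 0 ≤ b)
    (hρ : 0 < ρ) (hab : 2 * ρ ≤ a + b) (hk : 0 ≤ k) (hl : 0 ≤ l) :
    a ^ (-k) * b ^ (-l) ≤
      (if a < ρ then ρ ^ (-l) * a ^ (-k) else a ^ (-(k + l))) +
        (if b < ρ then ρ ^ (-k) * b ^ (-l) else b ^ (-(k + l))) := by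
  by_cases ha' : a < ρ
  · have hb' : ¬ b < ρ := by linarith
    rw [if_pos ha', if_neg hb', mul_comm (ρ ^ (-l))]
    refine le_add_of_le_of_nonneg (mul_le_mul_of_nonneg_left ?_ (by positivity)) (by positivity)
    exact rpow_le_rpow_of_nonpos hρ (not_lt.mp hb') (by linarith)
  by_cases hb' : b < ρ
  · rw [if_neg ha', if_pos hb']
    refine le_add_of_nonneg_of_le ?_ (mul_le_mul_of_nonneg_right ?_ (by positivity))
    · positivity
    exact rpow_le_rpow_of_nonpos hρ (not_lt.mp ha') (by linarith)
  rw [if_neg ha', if_neg hb']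
  exact rpow_neg_mul_rpow_neg_le_add (by linarith) (by linarith) hk hl

theorem ofReal_rpow_mul_mul_ofReal_rpow {ρ : ℝ} (hρ : 0 < ρ) (K : ℝ≥0∞) {x y z : ℝ}
    (h : x + y = z) :
    ENNReal.ofReal (ρ ^ x) * (K * ENNReal.ofReal (ρ ^ y)) = K * ENNReal.ofReal (ρ ^ z) := by
  rw [mul_left_comm, ← ENNReal.ofReal_mul (by positivity), ← rpow_add hρ, h]

theorem ofReal_div_two_rpow {D : ℝ} (hD : 0 ≤ D) (x : ℝ) :
    ENNReal.ofReal ((D / 2) ^ x) = ENNReal.ofReal (2 ^ (-x)) * ENNReal.ofReal (D ^ x) := by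
  rw [← ENNReal.ofReal_mul (by positivity), div_rpow hD zero_le_two, rpow_neg zero_le_two,
    div_eq_inv_mul]

theorem toReal_le_coe_mul_of_le_coe_mul_ofReal {I : ℝ≥0∞} {K : ℝ≥0} {x : ℝ} (hx : 0 ≤ x)
    (h : I ≤ K * ENNReal.ofReal x) : I.toReal ≤ K * x := by
  have := ENNReal.toReal_mono (by finiteness) h
  rwa [ENNReal.toReal_mul, ENNReal.coe_toReal, ENNReal.toReal_ofReal hx] at this

section JapaneseBracket

variable {E : Type*} [NormedAddCommGroup E]

theorem one_le_sqrt_one_add_norm_sq (x : E) : 1 ≤ √(1 + ‖x‖ ^ 2) :=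
  one_le_sqrt.mpr (by nlinarith [norm_nonneg x])

theorem norm_le_sqrt_one_add_norm_sq (x : E) : ‖x‖ ≤ √(1 + ‖x‖ ^ 2) :=
  le_sqrt_of_sq_le (by linarith)

theorem sqrt_one_add_norm_sq_rpow_neg_le_one {t : ℝ} (ht : 0 ≤ t) (x : E) :
    √(1 + ‖x‖ ^ 2) ^ (-t) ≤ 1 :=
  rpow_le_one_of_one_le_of_nonpos (one_le_sqrt_one_add_norm_sq x) (by linarith)

theorem sqrt_one_add_norm_sq_rpow_neg_le_norm_rpow_neg {t : ℝ} (ht : 0 ≤ t) {x : E} (hx : x ≠ 0) :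
    √(1 + ‖x‖ ^ 2) ^ (-t) ≤ ‖x‖ ^ (-t) :=
  rpow_le_rpow_of_nonpos (norm_pos_iff.mpr hx) (norm_le_sqrt_one_add_norm_sq x) (by linarith)

theorem ofReal_bracket_rpow_mul_ofReal_norm_sub_rpow_le_of_mem_ball {t q ρ : ℝ} (ht : 0 ≤ t)
    (hq : 0 ≤ q) {u z : E} (hz0 : z ≠ 0) (hzu : z ≠ u) (hz : z ∈ ball u ρ) :
    ENNReal.ofReal (√(1 + ‖z‖ ^ 2) ^ (-t)) * ENNReal.ofReal (‖z - u‖ ^ (-q)) ≤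
      (ball 0 ρ).indicator (fun z => ENNReal.ofReal (‖z‖ ^ (-(t + q)))) z +
        ENNReal.ofReal (‖z - u‖ ^ (-(t + q))) := by
  have ha : 0 < √(1 + ‖z‖ ^ 2) := one_pos.trans_le (one_le_sqrt_one_add_norm_sq z)
  have hb : 0 < ‖z - u‖ := norm_pos_iff.mpr (sub_ne_zero.mpr hzu)
  rw [← ENNReal.ofReal_mul (by positivity)]
  rcases le_or_gt ‖z - u‖ √(1 + ‖z‖ ^ 2) with hba | hab
  · refine le_add_left (ENNReal.ofReal_le_ofReal ?_)
    rw [neg_add, rpow_add hb]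
    exact mul_le_mul_of_nonneg_right (rpow_le_rpow_of_nonpos hb hba (by linarith)) (by positivity)
  have hz : z ∈ ball (0 : E) ρ := by
    rw [mem_ball_zero_iff]
    exact (norm_le_sqrt_one_add_norm_sq z).trans_lt (hab.trans (mem_ball_iff_norm.mp hz))
  rw [indicator_of_mem hz]
  refine le_add_right (ENNReal.ofReal_le_ofReal ?_)
  calc √(1 + ‖z‖ ^ 2) ^ (-t) * ‖z - u‖ ^ (-q)
      ≤ √(1 + ‖z‖ ^ 2) ^ (-t) * √(1 + ‖z‖ ^ 2) ^ (-q) :=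
        mul_le_mul_of_nonneg_left (rpow_le_rpow_of_nonpos ha hab.le (by linarith)) (by positivity)
    _ = √(1 + ‖z‖ ^ 2) ^ (-(t + q)) := by rw [neg_add, rpow_add ha]
    _ ≤ ‖z‖ ^ (-(t + q)) := sqrt_one_add_norm_sq_rpow_neg_le_norm_rpow_neg (by linarith) hz0

open Classical in
theorem ofReal_bracket_rpow_mul_ofReal_norm_sub_rpow_le_of_notMem_ball {t q ρ : ℝ} (ht : 0 ≤ t)
    (hq : 0 ≤ q) (hρ : 0 < ρ) {u z : E} (hz0 : z ≠ 0) (hz : z ∉ ball u ρ) :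
    ENNReal.ofReal (√(1 + ‖z‖ ^ 2) ^ (-t)) * ENNReal.ofReal (‖z - u‖ ^ (-q)) ≤
      (ball 0 ρ).piecewise (fun z => ENNReal.ofReal (ρ ^ (-q)) * ENNReal.ofReal (‖z‖ ^ (-t)))
        (fun z => ENNReal.ofReal (‖z‖ ^ (-(t + q)))) z +
      ENNReal.ofReal (‖z - u‖ ^ (-(t + q))) := by
  have hb : ρ ≤ ‖z - u‖ := by simpa [dist_eq_norm] using hz
  have hweight := sqrt_one_add_norm_sq_rpow_neg_le_norm_rpow_neg ht hz0
  by_cases hz' : z ∈ ball (0 : E) ρ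
  · rw [piecewise_eq_of_mem _ _ _ hz', mul_comm (ENNReal.ofReal (ρ ^ (-q)))]
    refine le_add_right (mul_le_mul' (ENNReal.ofReal_le_ofReal hweight) ?_)
    exact ENNReal.ofReal_le_ofReal (rpow_le_rpow_of_nonpos hρ hb (by linarith))
  have hzρ : ρ ≤ ‖z‖ := by simpa using hz'
  rw [piecewise_eq_of_notMem _ _ _ hz', ← ENNReal.ofReal_mul (by positivity),
    ← ENNReal.ofReal_add (by positivity) (by positivity)]
  refine ENNReal.ofReal_le_ofReal ((mul_le_mul_of_nonneg_right hweight (by positivity)).trans ?_)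
  exact rpow_neg_mul_rpow_neg_le_add (by linarith) (by linarith) ht hq

variable [NormedSpace ℝ E] [FiniteDimensional ℝ E] [MeasurableSpace E] [BorelSpace E]
  (μ : Measure E) [μ.IsAddHaarMeasure]

theorem lintegral_sqrt_one_add_norm_sq_rpow_neg_lt_top {τ : ℝ} (hτ : (finrank ℝ E : ℝ) < τ) :
    ∫⁻ x, ENNReal.ofReal (√(1 + ‖x‖ ^ 2) ^ (-τ)) ∂μ < ∞ := by
  have h : ∀ x : E, √(1 + ‖x‖ ^ 2) ^ (-τ) = (1 + ‖x‖ ^ 2) ^ (-τ / 2) := fun x => by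
    rw [sqrt_eq_rpow, ← rpow_mul (by positivity)]
    ring_nf
  simpa only [h] using (integrable_rpow_neg_one_add_norm_sq (μ := μ) hτ).lintegral_lt_top

end JapaneseBracket

section PowerSingularity

variable {E : Type*} [NormedAddCommGroup E] [NormedSpace ℝ E] [FiniteDimensional ℝ E]
  [MeasurableSpace E] [BorelSpace E] (μ : Measure E) [μ.IsAddHaarMeasure]

theorem setLIntegral_comp_smul_of_pos (f : E → ℝ≥0∞) {r : ℝ} (hr : 0 < r) (s : Set E) :
    ∫⁻ x in s, f (r • x) ∂μ = ENNReal.ofReal ((r ^ finrank ℝ E)⁻¹) * ∫⁻ x in r • s, f x ∂μ := by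
  have hmap := μ.map_addHaar_smul hr.ne'
  rw [abs_of_pos (by positivity)] at hmap
  have hpres : MeasurePreserving (r • · : E → E) μ (ENNReal.ofReal ((r ^ finrank ℝ E)⁻¹) • μ) :=
    ⟨measurable_const_smul r, hmap⟩
  rw [hpres.setLIntegral_comp_emb (measurableEmbedding_const_smul₀ hr.ne') f s, image_smul,
    Measure.restrict_smul, lintegral_smul_measure, smul_eq_mul]

theorem setLIntegral_smul_set_norm_rpow (p : ℝ) {r : ℝ} (hr : 0 < r) (s : Set E) :
    ∫⁻ x in r • s, ENNReal.ofReal (‖x‖ ^ (-p)) ∂μ =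
      ENNReal.ofReal (r ^ ((finrank ℝ E : ℝ) - p)) * ∫⁻ x in s, ENNReal.ofReal (‖x‖ ^ (-p)) ∂μ := by
  have hscale : ∀ x : E, ENNReal.ofReal (‖r • x‖ ^ (-p)) =
      ENNReal.ofReal (r ^ (-p)) * ENNReal.ofReal (‖x‖ ^ (-p)) := fun x => by
    rw [norm_smul, norm_of_nonneg hr.le, mul_rpow hr.le (norm_nonneg x),
      ENNReal.ofReal_mul (by positivity)]
  have h := setLIntegral_comp_smul_of_pos μ (fun x => ENNReal.ofReal (‖x‖ ^ (-p))) hr s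
  simp only [hscale, lintegral_const_mul' _ _ ENNReal.ofReal_ne_top] at h
  rw [sub_eq_add_neg, rpow_add hr, ENNReal.ofReal_mul (by positivity), mul_assoc, h,
    ← mul_assoc, ← ENNReal.ofReal_mul (by positivity), rpow_natCast,
    mul_inv_cancel₀ (by positivity), ENNReal.ofReal_one, one_mul]

theorem lintegral_ball_norm_sub_rpow (p : ℝ) (u : E) {r : ℝ} (hr : 0 < r) :
    ∫⁻ x in ball u r, ENNReal.ofReal (‖x - u‖ ^ (-p)) ∂μ =
      ENNReal.ofReal (r ^ ((finrank ℝ E : ℝ) - p)) *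
        ∫⁻ x in ball 0 1, ENNReal.ofReal (‖x‖ ^ (-p)) ∂μ := by
  have hpre : (· - u) ⁻¹' ball (0 : E) r = ball u r := by ext; simp [dist_eq_norm]
  rw [← hpre, (measurePreserving_sub_right μ u).setLIntegral_comp_preimage_emb
    (measurableEmbedding_subRight u) (fun x => ENNReal.ofReal (‖x‖ ^ (-p))),
    ← smul_unitBall_of_pos hr, setLIntegral_smul_set_norm_rpow μ p hr]

theorem lintegral_compl_ball_norm_sub_rpow (p : ℝ) (u : E) {r : ℝ} (hr : 0 < r) :
    ∫⁻ x in (ball u r)ᶜ, ENNReal.ofReal (‖x - u‖ ^ (-p)) ∂μ =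
      ENNReal.ofReal (r ^ ((finrank ℝ E : ℝ) - p)) *
        ∫⁻ x in (ball 0 1)ᶜ, ENNReal.ofReal (‖x‖ ^ (-p)) ∂μ := by
  have hpre : (· - u) ⁻¹' (ball (0 : E) r)ᶜ = (ball u r)ᶜ := by ext; simp [dist_eq_norm]
  have hsmul : r • (ball (0 : E) 1)ᶜ = (ball 0 r)ᶜ := by
    simpa [Units.smul_mk0, smul_unitBall_of_pos hr] using
      smul_set_compl (a := Units.mk0 r hr.ne') (s := ball (0 : E) 1)
  rw [← hpre, (measurePreserving_sub_right μ u).setLIntegral_comp_preimage_emb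
    (measurableEmbedding_subRight u) (fun x => ENNReal.ofReal (‖x‖ ^ (-p))), ← hsmul,
    setLIntegral_smul_set_norm_rpow μ p hr]

theorem integrableOn_unitBall_norm_rpow_iff [Nontrivial E] {p : ℝ} :
    IntegrableOn (fun x : E => ‖x‖ ^ (-p)) (ball 0 1) μ ↔ p < finrank ℝ E := by
  have hpow : EqOn (fun y : ℝ => y ^ (finrank ℝ E - 1) • y ^ (-p))
      (fun y => y ^ ((finrank ℝ E : ℝ) - 1 - p)) (Ioo 0 1) := fun y hy => by
    dsimp only
    rw [smul_eq_mul, ← rpow_natCast, Nat.cast_pred finrank_pos, ← rpow_add hy.1,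
      sub_eq_add_neg _ p]
  rw [integrableOn_fun_norm_addHaar μ (f := fun y => y ^ (-p)),
    integrableOn_congr_fun hpow measurableSet_Ioo,
    intervalIntegral.integrableOn_Ioo_rpow_iff zero_lt_one]
  constructor <;> intro h <;> linarith

theorem lintegral_unitBall_norm_rpow_lt_top_iff [Nontrivial E] {p : ℝ} :
    ∫⁻ x in ball 0 1, ENNReal.ofReal (‖x‖ ^ (-p)) ∂μ < ∞ ↔ p < finrank ℝ E := by
  rw [← integrableOn_unitBall_norm_rpow_iff μ, IntegrableOn, Integrable,
    hasFiniteIntegral_iff_ofReal (ae_of_all _ fun x => by positivity)]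
  exact (and_iff_right (measurable_norm.pow_const _).aestronglyMeasurable).symm

theorem lintegral_compl_unitBall_norm_rpow_lt_top {p : ℝ} (hp : (finrank ℝ E : ℝ) < p) :
    ∫⁻ x in (ball 0 1)ᶜ, ENNReal.ofReal (‖x‖ ^ (-p)) ∂μ < ∞ := by
  have hp0 : 0 < p := (Nat.cast_nonneg _).trans_lt hp
  have hle : ∀ x ∈ (ball (0 : E) 1)ᶜ, ENNReal.ofReal (‖x‖ ^ (-p)) ≤
      ENNReal.ofReal (2 ^ p) * ENNReal.ofReal ((1 + ‖x‖) ^ (-p)) := fun x hx => by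
    have hx1 : 1 ≤ ‖x‖ := by simpa using hx
    rw [← ENNReal.ofReal_mul (by positivity)]
    refine ENNReal.ofReal_le_ofReal ?_
    calc ‖x‖ ^ (-p) ≤ ((1 + ‖x‖) / 2) ^ (-p) :=
          rpow_le_rpow_of_nonpos (by positivity) (by linarith) (by linarith)
      _ = 2 ^ p * (1 + ‖x‖) ^ (-p) := by
          rw [div_rpow (by positivity) zero_le_two, rpow_neg zero_le_two, div_inv_eq_mul,
            mul_comm]
  calc ∫⁻ x in (ball 0 1)ᶜ, ENNReal.ofReal (‖x‖ ^ (-p)) ∂μ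
      ≤ ∫⁻ x in (ball 0 1)ᶜ, ENNReal.ofReal (2 ^ p) * ENNReal.ofReal ((1 + ‖x‖) ^ (-p)) ∂μ :=
        setLIntegral_mono (by fun_prop) hle
    _ ≤ ∫⁻ x, ENNReal.ofReal (2 ^ p) * ENNReal.ofReal ((1 + ‖x‖) ^ (-p)) ∂μ :=
        setLIntegral_le_lintegral _ _
    _ < ∞ := by
        rw [lintegral_const_mul' _ _ ENNReal.ofReal_ne_top]
        exact ENNReal.mul_lt_top ENNReal.ofReal_lt_top (finite_integral_one_add_norm hp)

theorem exists_lintegral_ball_norm_sub_rpow_le [Nontrivial E] {p : ℝ}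
    (hp : p < finrank ℝ E) :
    ∃ K : ℝ≥0, ∀ (u : E) (r : ℝ), 0 < r →
      ∫⁻ x in ball u r, ENNReal.ofReal (‖x - u‖ ^ (-p)) ∂μ ≤
        K * ENNReal.ofReal (r ^ ((finrank ℝ E : ℝ) - p)) := by
  have hK := ((lintegral_unitBall_norm_rpow_lt_top_iff μ).mpr hp).ne
  refine ⟨(∫⁻ x in ball 0 1, ENNReal.ofReal (‖x‖ ^ (-p)) ∂μ).toNNReal, fun u r hr => ?_⟩
  rw [ENNReal.coe_toNNReal hK, lintegral_ball_norm_sub_rpow μ p u hr, mul_comm]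

theorem exists_lintegral_compl_ball_norm_sub_rpow_le {p : ℝ} (hp : (finrank ℝ E : ℝ) < p) :
    ∃ K : ℝ≥0, ∀ (u : E) (r : ℝ), 0 < r →
      ∫⁻ x in (ball u r)ᶜ, ENNReal.ofReal (‖x - u‖ ^ (-p)) ∂μ ≤
        K * ENNReal.ofReal (r ^ ((finrank ℝ E : ℝ) - p)) := by
  have hK := (lintegral_compl_unitBall_norm_rpow_lt_top μ hp).ne
  refine ⟨(∫⁻ x in (ball 0 1)ᶜ, ENNReal.ofReal (‖x‖ ^ (-p)) ∂μ).toNNReal, fun u r hr => ?_⟩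
  rw [ENNReal.coe_toNNReal hK, lintegral_compl_ball_norm_sub_rpow μ p u hr, mul_comm]

theorem lintegral_ball_norm_sub_rpow_eq_top [Nontrivial E] {p : ℝ} (hp : (finrank ℝ E : ℝ) ≤ p)
    (u : E) : ∫⁻ x in ball u 1, ENNReal.ofReal (‖x - u‖ ^ (-p)) ∂μ = ∞ := by
  rw [lintegral_ball_norm_sub_rpow μ p u one_pos, one_rpow, ENNReal.ofReal_one, one_mul,
    ← not_lt_top_iff, lintegral_unitBall_norm_rpow_lt_top_iff]
  exact hp.not_gt

end PowerSingularity

section SingleCenter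

variable {E : Type*} [NormedAddCommGroup E] [NormedSpace ℝ E] [FiniteDimensional ℝ E]
  [MeasurableSpace E] [BorelSpace E] (μ : Measure E) [μ.IsAddHaarMeasure] [Nontrivial E]

theorem exists_lintegral_bracket_rpow_mul_norm_sub_rpow_le {t q : ℝ} (ht : 0 ≤ t) (hq : 0 ≤ q)
    (hqd : q < finrank ℝ E) (htq : (finrank ℝ E : ℝ) < t + q) :
    ∃ K : ℝ≥0, ∀ u : E,
      ∫⁻ z, ENNReal.ofReal (√(1 + ‖z‖ ^ 2) ^ (-t)) * ENNReal.ofReal (‖z - u‖ ^ (-q)) ∂μ ≤ K := by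
  classical
  obtain ⟨K₁, h₁⟩ := exists_lintegral_ball_norm_sub_rpow_le μ hqd
  obtain ⟨K₂, h₂⟩ := exists_lintegral_compl_ball_norm_sub_rpow_le μ htq
  have hJ := (lintegral_sqrt_one_add_norm_sq_rpow_neg_lt_top μ htq).ne
  refine ⟨K₁ + K₂ + (∫⁻ z, ENNReal.ofReal (√(1 + ‖z‖ ^ 2) ^ (-(t + q))) ∂μ).toNNReal, fun u => ?_⟩
  have hpt : ∀ z, ENNReal.ofReal (√(1 + ‖z‖ ^ 2) ^ (-t)) * ENNReal.ofReal (‖z - u‖ ^ (-q)) ≤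
      (ball u 1).piecewise (fun z => ENNReal.ofReal (‖z - u‖ ^ (-q)))
        (fun z => ENNReal.ofReal (‖z - u‖ ^ (-(t + q)))) z +
      ENNReal.ofReal (√(1 + ‖z‖ ^ 2) ^ (-(t + q))) := fun z => by
    by_cases hz : z ∈ ball u 1
    · rw [piecewise_eq_of_mem _ _ _ hz]
      refine le_add_right (mul_le_of_le_one_left' ?_)
      exact ENNReal.ofReal_le_one.mpr (sqrt_one_add_norm_sq_rpow_neg_le_one ht z)
    · rw [piecewise_eq_of_notMem _ _ _ hz, ← ENNReal.ofReal_mul (by positivity),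
        ← ENNReal.ofReal_add (by positivity) (by positivity)]
      have hzu : 1 ≤ ‖z - u‖ := by simpa [dist_eq_norm] using hz
      exact ENNReal.ofReal_le_ofReal ((rpow_neg_mul_rpow_neg_le_add
        (one_pos.trans_le (one_le_sqrt_one_add_norm_sq z)) (by linarith) ht hq).trans_eq
        (add_comm _ _))
  calc ∫⁻ z, ENNReal.ofReal (√(1 + ‖z‖ ^ 2) ^ (-t)) * ENNReal.ofReal (‖z - u‖ ^ (-q)) ∂μ
      ≤ ∫⁻ z, (ball u 1).piecewise (fun z => ENNReal.ofReal (‖z - u‖ ^ (-q)))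
          (fun z => ENNReal.ofReal (‖z - u‖ ^ (-(t + q)))) z +
          ENNReal.ofReal (√(1 + ‖z‖ ^ 2) ^ (-(t + q))) ∂μ := lintegral_mono hpt
    _ = ∫⁻ z in ball u 1, ENNReal.ofReal (‖z - u‖ ^ (-q)) ∂μ +
          ∫⁻ z in (ball u 1)ᶜ, ENNReal.ofReal (‖z - u‖ ^ (-(t + q))) ∂μ +
          ∫⁻ z, ENNReal.ofReal (√(1 + ‖z‖ ^ 2) ^ (-(t + q))) ∂μ := by
        rw [lintegral_add_right _ (by fun_prop), lintegral_piecewise measurableSet_ball]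
    _ ≤ K₁ + K₂ + ∫⁻ z, ENNReal.ofReal (√(1 + ‖z‖ ^ 2) ^ (-(t + q))) ∂μ := by
        gcongr
        · simpa using h₁ u 1 one_pos
        · simpa using h₂ u 1 one_pos
    _ = _ := by rw [ENNReal.coe_add, ENNReal.coe_add, ENNReal.coe_toNNReal hJ]

theorem exists_setLIntegral_ball_bracket_rpow_mul_norm_sub_rpow_le_of_lt {t q : ℝ} (ht : 0 ≤ t)
    (hq : 0 ≤ q) (htq : t + q < finrank ℝ E) :
    ∃ K : ℝ≥0, ∀ (u : E) (ρ : ℝ), 0 < ρ →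
      ∫⁻ z in ball u ρ, ENNReal.ofReal (√(1 + ‖z‖ ^ 2) ^ (-t)) *
          ENNReal.ofReal (‖z - u‖ ^ (-q)) ∂μ ≤
        K * ENNReal.ofReal (ρ ^ ((finrank ℝ E : ℝ) - (t + q))) := by
  obtain ⟨K, hK⟩ := exists_lintegral_ball_norm_sub_rpow_le μ htq
  refine ⟨K + K, fun u ρ hρ => ?_⟩
  have hpt : ∀ᵐ z ∂μ, z ∈ ball u ρ →
      ENNReal.ofReal (√(1 + ‖z‖ ^ 2) ^ (-t)) * ENNReal.ofReal (‖z - u‖ ^ (-q)) ≤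
        (ball 0 ρ).indicator (fun z => ENNReal.ofReal (‖z‖ ^ (-(t + q)))) z +
          ENNReal.ofReal (‖z - u‖ ^ (-(t + q))) := by
    filter_upwards [Measure.ae_ne μ 0, Measure.ae_ne μ u] with z hz0 hzu hz
    exact ofReal_bracket_rpow_mul_ofReal_norm_sub_rpow_le_of_mem_ball ht hq hz0 hzu hz
  calc ∫⁻ z in ball u ρ, ENNReal.ofReal (√(1 + ‖z‖ ^ 2) ^ (-t)) * ENNReal.ofReal (‖z - u‖ ^ (-q)) ∂μ
      ≤ ∫⁻ z in ball u ρ, (ball 0 ρ).indicator (fun z => ENNReal.ofReal (‖z‖ ^ (-(t + q)))) z +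
          ENNReal.ofReal (‖z - u‖ ^ (-(t + q))) ∂μ :=
        setLIntegral_mono_ae (((measurable_norm.pow_const _).ennreal_ofReal.indicator
          measurableSet_ball).add (by fun_prop)).aemeasurable hpt
    _ ≤ ∫⁻ z, (ball 0 ρ).indicator (fun z => ENNReal.ofReal (‖z‖ ^ (-(t + q)))) z ∂μ +
          ∫⁻ z in ball u ρ, ENNReal.ofReal (‖z - u‖ ^ (-(t + q))) ∂μ := by
        rw [lintegral_add_right _ (by fun_prop)]
        exact add_le_add_left (setLIntegral_le_lintegral _ _) _
    _ ≤ K * ENNReal.ofReal (ρ ^ ((finrank ℝ E : ℝ) - (t + q))) +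
          K * ENNReal.ofReal (ρ ^ ((finrank ℝ E : ℝ) - (t + q))) := by
        rw [lintegral_indicator measurableSet_ball]
        exact add_le_add (by simpa using hK 0 ρ hρ) (hK u ρ hρ)
    _ = _ := by rw [ENNReal.coe_add, add_mul]

theorem exists_setLIntegral_compl_ball_bracket_rpow_mul_norm_sub_rpow_le {t q : ℝ} (ht : 0 ≤ t)
    (htd : t < finrank ℝ E) (htq : (finrank ℝ E : ℝ) < t + q) :
    ∃ K : ℝ≥0, ∀ (u : E) (ρ : ℝ), 0 < ρ →
      ∫⁻ z in (ball u ρ)ᶜ, ENNReal.ofReal (√(1 + ‖z‖ ^ 2) ^ (-t)) *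
          ENNReal.ofReal (‖z - u‖ ^ (-q)) ∂μ ≤
        K * ENNReal.ofReal (ρ ^ ((finrank ℝ E : ℝ) - (t + q))) := by
  classical
  have hq : 0 ≤ q := by linarith
  obtain ⟨K₁, hK₁⟩ := exists_lintegral_ball_norm_sub_rpow_le μ htd
  obtain ⟨K₂, hK₂⟩ := exists_lintegral_compl_ball_norm_sub_rpow_le μ htq
  refine ⟨K₁ + K₂ + K₂, fun u ρ hρ => ?_⟩
  set g : E → ℝ≥0∞ := (ball 0 ρ).piecewise
    (fun z => ENNReal.ofReal (ρ ^ (-q)) * ENNReal.ofReal (‖z‖ ^ (-t)))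
    (fun z => ENNReal.ofReal (‖z‖ ^ (-(t + q))))
  have hg : Measurable g := Measurable.piecewise measurableSet_ball (by fun_prop) (by fun_prop)
  have hpt : ∀ᵐ z ∂μ, z ∈ (ball u ρ)ᶜ →
      ENNReal.ofReal (√(1 + ‖z‖ ^ 2) ^ (-t)) * ENNReal.ofReal (‖z - u‖ ^ (-q)) ≤
        g z + ENNReal.ofReal (‖z - u‖ ^ (-(t + q))) := by
    filter_upwards [Measure.ae_ne μ 0] with z hz0 hz
    exact ofReal_bracket_rpow_mul_ofReal_norm_sub_rpow_le_of_notMem_ball ht hq hρ hz0 hz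
  calc ∫⁻ z in (ball u ρ)ᶜ, ENNReal.ofReal (√(1 + ‖z‖ ^ 2) ^ (-t)) *
          ENNReal.ofReal (‖z - u‖ ^ (-q)) ∂μ
      ≤ ∫⁻ z in (ball u ρ)ᶜ, g z + ENNReal.ofReal (‖z - u‖ ^ (-(t + q))) ∂μ :=
        setLIntegral_mono_ae (hg.add (by fun_prop)).aemeasurable hpt
    _ ≤ ∫⁻ z, g z ∂μ + ∫⁻ z in (ball u ρ)ᶜ, ENNReal.ofReal (‖z - u‖ ^ (-(t + q))) ∂μ := by
        rw [lintegral_add_right _ (by fun_prop)]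
        exact add_le_add_left (setLIntegral_le_lintegral _ _) _
    _ = ENNReal.ofReal (ρ ^ (-q)) * ∫⁻ z in ball 0 ρ, ENNReal.ofReal (‖z - 0‖ ^ (-t)) ∂μ +
          ∫⁻ z in (ball 0 ρ)ᶜ, ENNReal.ofReal (‖z - 0‖ ^ (-(t + q))) ∂μ +
          ∫⁻ z in (ball u ρ)ᶜ, ENNReal.ofReal (‖z - u‖ ^ (-(t + q))) ∂μ := by
        rw [lintegral_piecewise measurableSet_ball, lintegral_const_mul _ (by fun_prop)]
        simp only [sub_zero]
    _ ≤ ENNReal.ofReal (ρ ^ (-q)) * (K₁ * ENNReal.ofReal (ρ ^ ((finrank ℝ E : ℝ) - t))) +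
          K₂ * ENNReal.ofReal (ρ ^ ((finrank ℝ E : ℝ) - (t + q))) +
          K₂ * ENNReal.ofReal (ρ ^ ((finrank ℝ E : ℝ) - (t + q))) := by
        gcongr
        exacts [hK₁ 0 ρ hρ, hK₂ 0 ρ hρ, hK₂ u ρ hρ]
    _ = _ := by
        rw [ofReal_rpow_mul_mul_ofReal_rpow hρ _ (z := (finrank ℝ E : ℝ) - (t + q)) (by ring)]
        push_cast
        ring

theorem exists_setLIntegral_ball_bracket_rpow_mul_norm_sub_rpow_le {t q : ℝ} (ht : 0 ≤ t)
    (hq : 0 ≤ q) (hqd : q < finrank ℝ E) (htq : t + q ≠ finrank ℝ E) :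
    ∃ K : ℝ≥0, ∀ (u : E) (ρ : ℝ), 0 < ρ →
      ∫⁻ z in ball u ρ, ENNReal.ofReal (√(1 + ‖z‖ ^ 2) ^ (-t)) *
          ENNReal.ofReal (‖z - u‖ ^ (-q)) ∂μ ≤
        K * ENNReal.ofReal (ρ ^ max ((finrank ℝ E : ℝ) - (t + q)) 0) := by
  rcases htq.lt_or_gt with hlt | hgt
  · obtain ⟨K, hK⟩ :=
      exists_setLIntegral_ball_bracket_rpow_mul_norm_sub_rpow_le_of_lt μ ht hq hlt
    refine ⟨K, fun u ρ hρ => ?_⟩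
    rw [max_eq_left (by linarith)]
    exact hK u ρ hρ
  · obtain ⟨K, hK⟩ := exists_lintegral_bracket_rpow_mul_norm_sub_rpow_le μ ht hq hqd hgt
    refine ⟨K, fun u ρ _ => ?_⟩
    rw [max_eq_right (by linarith), rpow_zero, ENNReal.ofReal_one, mul_one]
    exact (setLIntegral_le_lintegral _ _).trans (hK u)

end SingleCenter

section TwoCenters

variable {E : Type*} [NormedAddCommGroup E] [MeasurableSpace E] (μ : Measure E)

/-- The integral of the theorem with an `ℝ≥0∞`-valued integrand. The Bochner integral is its
`toReal`, so it is `0` when this integral diverges. -/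
noncomputable def twoCenterIntegral (s k l : ℝ) (u₁ u₂ : E) : ℝ≥0∞ :=
  ∫⁻ z, ENNReal.ofReal (√(1 + ‖z‖ ^ 2) ^ (-s)) *
    (ENNReal.ofReal (‖z - u₁‖ ^ (-k)) * ENNReal.ofReal (‖z - u₂‖ ^ (-l))) ∂μ

theorem twoCenterIntegral_anti {s t : ℝ} (hts : t ≤ s) (k l : ℝ) (u₁ u₂ : E) :
    twoCenterIntegral μ s k l u₁ u₂ ≤ twoCenterIntegral μ t k l u₁ u₂ :=
  lintegral_mono fun z => mul_le_mul_left (ENNReal.ofReal_le_ofReal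
    (rpow_le_rpow_of_exponent_le (one_le_sqrt_one_add_norm_sq z) (neg_le_neg hts))) _

variable [BorelSpace E]

theorem integral_bracket_div_eq_toReal_twoCenterIntegral (s k l : ℝ) (u₁ u₂ : E) :
    ∫ z, √(1 + ‖z‖ ^ 2) ^ (-s) / (‖z - u₁‖ ^ k * ‖z - u₂‖ ^ l) ∂μ =
      (twoCenterIntegral μ s k l u₁ u₂).toReal := by
  rw [integral_eq_lintegral_of_nonneg_ae (ae_of_all _ fun z => by positivity)
    (Measurable.aestronglyMeasurable (by fun_prop)),
    twoCenterIntegral]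
  congr 1
  refine lintegral_congr fun z => ?_
  rw [div_eq_mul_inv, mul_inv, ← rpow_neg (norm_nonneg _), ← rpow_neg (norm_nonneg _),
    ENNReal.ofReal_mul (by positivity), ENNReal.ofReal_mul (by positivity)]

theorem lintegral_mul_norm_sub_rpow_mul_norm_sub_rpow_le {w : E → ℝ≥0∞} (hw : Measurable w)
    {u₁ u₂ : E} {ρ k l : ℝ} (hρ : 0 < ρ) (hu : 2 * ρ ≤ ‖u₁ - u₂‖) (hk : 0 ≤ k) (hl : 0 ≤ l) :
    ∫⁻ z, w z * (ENNReal.ofReal (‖z - u₁‖ ^ (-k)) * ENNReal.ofReal (‖z - u₂‖ ^ (-l))) ∂μ ≤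
      (ENNReal.ofReal (ρ ^ (-l)) * ∫⁻ z in ball u₁ ρ, w z * ENNReal.ofReal (‖z - u₁‖ ^ (-k)) ∂μ +
        ∫⁻ z in (ball u₁ ρ)ᶜ, w z * ENNReal.ofReal (‖z - u₁‖ ^ (-(k + l))) ∂μ) +
      (ENNReal.ofReal (ρ ^ (-k)) * ∫⁻ z in ball u₂ ρ, w z * ENNReal.ofReal (‖z - u₂‖ ^ (-l)) ∂μ +
        ∫⁻ z in (ball u₂ ρ)ᶜ, w z * ENNReal.ofReal (‖z - u₂‖ ^ (-(k + l))) ∂μ) := by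
  classical
  set near : E → ℝ → ℝ → E → ℝ≥0∞ := fun u a b =>
    (ball u ρ).piecewise
      (fun z => ENNReal.ofReal (ρ ^ (-b)) * (w z * ENNReal.ofReal (‖z - u‖ ^ (-a))))
      (fun z => w z * ENNReal.ofReal (‖z - u‖ ^ (-(k + l))))
  have hnear : ∀ u a b z, w z * ENNReal.ofReal
      (if ‖z - u‖ < ρ then ρ ^ (-b) * ‖z - u‖ ^ (-a) else ‖z - u‖ ^ (-(k + l))) = near u a b z := by
    intro u a b z
    simp only [near]
    by_cases hz : ‖z - u‖ < ρ
    · rw [if_pos hz, piecewise_eq_of_mem _ _ _ (mem_ball_iff_norm.mpr hz),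
        ENNReal.ofReal_mul (by positivity), mul_left_comm]
    · rw [if_neg hz, piecewise_eq_of_notMem _ _ _ (fun h => hz (mem_ball_iff_norm.mp h))]
  have hpt : ∀ z, w z * (ENNReal.ofReal (‖z - u₁‖ ^ (-k)) * ENNReal.ofReal (‖z - u₂‖ ^ (-l))) ≤
      near u₁ k l z + near u₂ l k z := fun z => by
    have h := rpow_neg_mul_rpow_neg_le_of_two_mul_le_add (norm_nonneg (z - u₁))
      (norm_nonneg (z - u₂)) hρ ((hu.trans (norm_sub_le_norm_sub_add_norm_sub u₁ z u₂)).trans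
        (by rw [norm_sub_rev])) hk hl
    rw [← hnear, ← hnear, ← mul_add,
      ← ENNReal.ofReal_add (by split_ifs <;> positivity) (by split_ifs <;> positivity),
      ← ENNReal.ofReal_mul (by positivity)]
    exact mul_le_mul_right (ENNReal.ofReal_le_ofReal h) _
  have hmeas : ∀ u a b, Measurable (near u a b) := fun u a b =>
    Measurable.piecewise measurableSet_ball (by fun_prop) (by fun_prop)
  calc _ ≤ ∫⁻ z, near u₁ k l z + near u₂ l k z ∂μ := lintegral_mono hpt
    _ = _ := by
      rw [lintegral_add_left (hmeas u₁ k l), lintegral_piecewise measurableSet_ball,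
        lintegral_piecewise measurableSet_ball, lintegral_const_mul _ (by fun_prop),
        lintegral_const_mul _ (by fun_prop)]

end TwoCenters

section Regimes

variable {E : Type*} [NormedAddCommGroup E] [NormedSpace ℝ E] [FiniteDimensional ℝ E]
  [MeasurableSpace E] [BorelSpace E] (μ : Measure E) [μ.IsAddHaarMeasure] [Nontrivial E]

theorem twoCenterIntegral_self_eq_top {s k l : ℝ} (hs : 0 ≤ s) (hkl : (finrank ℝ E : ℝ) ≤ k + l)
    (u : E) : twoCenterIntegral μ s k l u u = ∞ := by
  set M := √(1 + (‖u‖ + 1) ^ 2)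
  have hM : 0 < M := by positivity
  have hlow : ∀ᵐ z ∂μ, z ∈ ball u 1 →
      ENNReal.ofReal (M ^ (-s)) * ENNReal.ofReal (‖z - u‖ ^ (-(k + l))) ≤
        ENNReal.ofReal (√(1 + ‖z‖ ^ 2) ^ (-s)) *
          (ENNReal.ofReal (‖z - u‖ ^ (-k)) * ENNReal.ofReal (‖z - u‖ ^ (-l))) := by
    filter_upwards [Measure.ae_ne μ u] with z hzu hz
    have hb : 0 < ‖z - u‖ := norm_pos_iff.mpr (sub_ne_zero.mpr hzu)
    have hzM : √(1 + ‖z‖ ^ 2) ≤ M := by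
      have : ‖z‖ ≤ ‖u‖ + 1 := by
        have := norm_le_norm_add_norm_sub' z u
        rw [mem_ball_iff_norm] at hz
        linarith
      show √(1 + ‖z‖ ^ 2) ≤ √(1 + (‖u‖ + 1) ^ 2)
      gcongr
    rw [neg_add, rpow_add hb, ENNReal.ofReal_mul (by positivity)]
    exact mul_le_mul_left (ENNReal.ofReal_le_ofReal
      (rpow_le_rpow_of_nonpos (one_pos.trans_le (one_le_sqrt_one_add_norm_sq z)) hzM
        (neg_nonpos.mpr hs))) _
  rw [eq_top_iff]
  calc ∞ = ENNReal.ofReal (M ^ (-s)) *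
        ∫⁻ z in ball u 1, ENNReal.ofReal (‖z - u‖ ^ (-(k + l))) ∂μ := by
        rw [lintegral_ball_norm_sub_rpow_eq_top μ hkl, ENNReal.mul_top]
        exact (ENNReal.ofReal_pos.mpr (by positivity)).ne'
    _ = ∫⁻ z in ball u 1, ENNReal.ofReal (M ^ (-s)) * ENNReal.ofReal (‖z - u‖ ^ (-(k + l))) ∂μ :=
        (lintegral_const_mul _ (by fun_prop)).symm
    _ ≤ ∫⁻ z in ball u 1, ENNReal.ofReal (√(1 + ‖z‖ ^ 2) ^ (-s)) *
          (ENNReal.ofReal (‖z - u‖ ^ (-k)) * ENNReal.ofReal (‖z - u‖ ^ (-l))) ∂μ :=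
        setLIntegral_mono_ae (by fun_prop) hlow
    _ ≤ twoCenterIntegral μ s k l u u := setLIntegral_le_lintegral _ _

theorem exists_twoCenterIntegral_le_of_lt {s k l : ℝ} (hs : 0 ≤ s) (hk : 0 ≤ k) (hl : 0 ≤ l)
    (hkl : k + l < finrank ℝ E) (hskl : (finrank ℝ E : ℝ) < k + l + s) :
    ∃ K : ℝ≥0, ∀ u₁ u₂ : E, twoCenterIntegral μ s k l u₁ u₂ ≤ K := by
  obtain ⟨K, hK⟩ := exists_lintegral_bracket_rpow_mul_norm_sub_rpow_le μ hs (by linarith) hkl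
    (by linarith)
  refine ⟨K + K, fun u₁ u₂ => ?_⟩
  have hpt : ∀ᵐ z ∂μ, ENNReal.ofReal (√(1 + ‖z‖ ^ 2) ^ (-s)) *
      (ENNReal.ofReal (‖z - u₁‖ ^ (-k)) * ENNReal.ofReal (‖z - u₂‖ ^ (-l))) ≤
        ENNReal.ofReal (√(1 + ‖z‖ ^ 2) ^ (-s)) * ENNReal.ofReal (‖z - u₁‖ ^ (-(k + l))) +
          ENNReal.ofReal (√(1 + ‖z‖ ^ 2) ^ (-s)) * ENNReal.ofReal (‖z - u₂‖ ^ (-(k + l))) := by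
    filter_upwards [Measure.ae_ne μ u₁, Measure.ae_ne μ u₂] with z hz₁ hz₂
    rw [← mul_add, ← ENNReal.ofReal_mul (by positivity),
      ← ENNReal.ofReal_add (by positivity) (by positivity)]
    exact mul_le_mul_right (ENNReal.ofReal_le_ofReal (rpow_neg_mul_rpow_neg_le_add
      (norm_pos_iff.mpr (sub_ne_zero.mpr hz₁)) (norm_pos_iff.mpr (sub_ne_zero.mpr hz₂)) hk hl)) _
  calc twoCenterIntegral μ s k l u₁ u₂
      ≤ ∫⁻ z, ENNReal.ofReal (√(1 + ‖z‖ ^ 2) ^ (-s)) * ENNReal.ofReal (‖z - u₁‖ ^ (-(k + l))) +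
          ENNReal.ofReal (√(1 + ‖z‖ ^ 2) ^ (-s)) * ENNReal.ofReal (‖z - u₂‖ ^ (-(k + l))) ∂μ :=
        lintegral_mono_ae hpt
    _ ≤ K + K := by
        rw [lintegral_add_left (by fun_prop)]
        exact add_le_add (hK u₁) (hK u₂)
    _ = ↑(K + K) := (ENNReal.coe_add _ _).symm

theorem exists_twoCenterIntegral_le_of_gt {s k l : ℝ} (hs : 0 ≤ s) (hk : 0 ≤ k) (hl : 0 ≤ l)
    (hkd : k < finrank ℝ E) (hld : l < finrank ℝ E) (hkl : (finrank ℝ E : ℝ) < k + l) :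
    ∃ K : ℝ≥0, ∀ u₁ u₂ : E, 0 < ‖u₁ - u₂‖ →
      twoCenterIntegral μ s k l u₁ u₂ ≤
        K * ENNReal.ofReal (‖u₁ - u₂‖ ^ ((finrank ℝ E : ℝ) - (k + l))) := by
  obtain ⟨K₁, hK₁⟩ := exists_lintegral_ball_norm_sub_rpow_le μ hkd
  obtain ⟨K₂, hK₂⟩ := exists_lintegral_ball_norm_sub_rpow_le μ hld
  obtain ⟨K₃, hK₃⟩ := exists_lintegral_compl_ball_norm_sub_rpow_le μ hkl
  refine ⟨(K₁ + K₃ + (K₂ + K₃)) * ((2 : ℝ) ^ (-((finrank ℝ E : ℝ) - (k + l)))).toNNReal,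
    fun u₁ u₂ hu => ?_⟩
  set ρ := ‖u₁ - u₂‖ / 2
  have hρ : 0 < ρ := by positivity
  calc twoCenterIntegral μ s k l u₁ u₂ ≤ twoCenterIntegral μ 0 k l u₁ u₂ :=
        twoCenterIntegral_anti μ hs k l u₁ u₂
    _ ≤ _ := lintegral_mul_norm_sub_rpow_mul_norm_sub_rpow_le μ (by fun_prop) hρ
        (by simp only [ρ]; linarith) hk hl
    _ ≤ (ENNReal.ofReal (ρ ^ (-l)) * (K₁ * ENNReal.ofReal (ρ ^ ((finrank ℝ E : ℝ) - k))) +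
          K₃ * ENNReal.ofReal (ρ ^ ((finrank ℝ E : ℝ) - (k + l)))) +
        (ENNReal.ofReal (ρ ^ (-k)) * (K₂ * ENNReal.ofReal (ρ ^ ((finrank ℝ E : ℝ) - l))) +
          K₃ * ENNReal.ofReal (ρ ^ ((finrank ℝ E : ℝ) - (k + l)))) := by
        simp only [neg_zero, rpow_zero, ENNReal.ofReal_one, one_mul]
        gcongr
        exacts [hK₁ u₁ ρ hρ, hK₃ u₁ ρ hρ, hK₂ u₂ ρ hρ, hK₃ u₂ ρ hρ]
    _ = (K₁ + K₃ + (K₂ + K₃)) * ENNReal.ofReal (ρ ^ ((finrank ℝ E : ℝ) - (k + l))) := by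
        rw [ofReal_rpow_mul_mul_ofReal_rpow hρ _ (z := (finrank ℝ E : ℝ) - (k + l)) (by ring),
          ofReal_rpow_mul_mul_ofReal_rpow hρ _ (z := (finrank ℝ E : ℝ) - (k + l)) (by ring)]
        ring
    _ = _ := by
        rw [ofReal_div_two_rpow (norm_nonneg _)]
        push_cast
        rw [← mul_assoc]
        rfl

theorem exists_twoCenterIntegral_le_of_one_le_of_lt_finrank {t k l m : ℝ} (ht : 0 ≤ t)
    (htd : t < finrank ℝ E) (hk : 0 ≤ k) (hl : 0 ≤ l) (hkd : k < finrank ℝ E)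
    (hld : l < finrank ℝ E) (htk : t + k ≠ finrank ℝ E) (htl : t + l ≠ finrank ℝ E) (hm : 0 ≤ m)
    (hmk : m ≤ k) (hml : m ≤ l) (hmkl : m + finrank ℝ E < t + (k + l)) :
    ∃ K : ℝ≥0, ∀ u₁ u₂ : E, 1 ≤ ‖u₁ - u₂‖ →
      twoCenterIntegral μ t k l u₁ u₂ ≤ K * ENNReal.ofReal (‖u₁ - u₂‖ ^ (-m)) := by
  obtain ⟨K₁, hK₁⟩ := exists_setLIntegral_ball_bracket_rpow_mul_norm_sub_rpow_le μ ht hk hkd htk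
  obtain ⟨K₂, hK₂⟩ := exists_setLIntegral_ball_bracket_rpow_mul_norm_sub_rpow_le μ ht hl hld htl
  obtain ⟨K₃, hK₃⟩ :=
    exists_setLIntegral_compl_ball_bracket_rpow_mul_norm_sub_rpow_le μ (q := k + l) ht htd
      (by linarith)
  set x₁ := -l + max ((finrank ℝ E : ℝ) - (t + k)) 0
  set x₂ := -k + max ((finrank ℝ E : ℝ) - (t + l)) 0
  set x₃ := (finrank ℝ E : ℝ) - (t + (k + l))
  have hx₁ : x₁ ≤ -m := by
    have : max ((finrank ℝ E : ℝ) - (t + k)) 0 ≤ l - m := max_le (by linarith) (by linarith)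
    linarith
  have hx₂ : x₂ ≤ -m := by
    have : max ((finrank ℝ E : ℝ) - (t + l)) 0 ≤ k - m := max_le (by linarith) (by linarith)
    linarith
  have hx₃ : x₃ ≤ -m := by linarith
  let c : ℝ → ℝ≥0 := fun x => ((2 : ℝ) ^ (-x)).toNNReal
  refine ⟨K₁ * c x₁ + K₃ * c x₃ + (K₂ * c x₂ + K₃ * c x₃), fun u₁ u₂ hu => ?_⟩
  set ρ := ‖u₁ - u₂‖ / 2
  have hρ : 0 < ρ := by positivity
  have hscale : ∀ x ≤ -m, ENNReal.ofReal (ρ ^ x) ≤ c x * ENNReal.ofReal (‖u₁ - u₂‖ ^ (-m)) :=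
    fun x hx => by
      rw [ofReal_div_two_rpow (norm_nonneg _)]
      exact mul_le_mul_right (ENNReal.ofReal_le_ofReal (rpow_le_rpow_of_exponent_le hu hx)) _
  calc twoCenterIntegral μ t k l u₁ u₂
      ≤ _ := lintegral_mul_norm_sub_rpow_mul_norm_sub_rpow_le μ (by fun_prop) hρ
        (by simp only [ρ]; linarith) hk hl
    _ ≤ (ENNReal.ofReal (ρ ^ (-l)) *
            (K₁ * ENNReal.ofReal (ρ ^ max ((finrank ℝ E : ℝ) - (t + k)) 0)) +
          K₃ * ENNReal.ofReal (ρ ^ x₃)) +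
        (ENNReal.ofReal (ρ ^ (-k)) *
            (K₂ * ENNReal.ofReal (ρ ^ max ((finrank ℝ E : ℝ) - (t + l)) 0)) +
          K₃ * ENNReal.ofReal (ρ ^ x₃)) := by
        gcongr
        exacts [hK₁ u₁ ρ hρ, hK₃ u₁ ρ hρ, hK₂ u₂ ρ hρ, hK₃ u₂ ρ hρ]
    _ ≤ (K₁ * (c x₁ * ENNReal.ofReal (‖u₁ - u₂‖ ^ (-m))) +
          K₃ * (c x₃ * ENNReal.ofReal (‖u₁ - u₂‖ ^ (-m)))) +
        (K₂ * (c x₂ * ENNReal.ofReal (‖u₁ - u₂‖ ^ (-m))) +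
          K₃ * (c x₃ * ENNReal.ofReal (‖u₁ - u₂‖ ^ (-m)))) := by
        rw [ofReal_rpow_mul_mul_ofReal_rpow hρ _ rfl, ofReal_rpow_mul_mul_ofReal_rpow hρ _ rfl]
        gcongr <;> exact hscale _ ‹_›
    _ = _ := by push_cast; ring

theorem exists_twoCenterIntegral_le_of_one_le {s k l m : ℝ} (hs : 0 < s) (hk : 0 ≤ k)
    (hl : 0 ≤ l) (hkd : k < finrank ℝ E) (hld : l < finrank ℝ E) (hm : 0 ≤ m) (hmk : m ≤ k)
    (hml : m ≤ l) (hmkl : m + finrank ℝ E < k + l + s) :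
    ∃ K : ℝ≥0, ∀ u₁ u₂ : E, 1 ≤ ‖u₁ - u₂‖ →
      twoCenterIntegral μ s k l u₁ u₂ ≤ K * ENNReal.ofReal (‖u₁ - u₂‖ ^ (-m)) := by
  have hd : (0 : ℝ) < finrank ℝ E := Nat.cast_pos.mpr finrank_pos
  rcases (add_nonneg hk hl).eq_or_lt with hkl | hkl
  · obtain ⟨K, hK⟩ := exists_twoCenterIntegral_le_of_lt μ hs.le hk hl (by linarith) (by linarith)
    refine ⟨K, fun u₁ u₂ _ => ?_⟩
    rw [show m = 0 by linarith, neg_zero, rpow_zero, ENNReal.ofReal_one, mul_one]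
    exact hK u₁ u₂
  have hI : max (m + finrank ℝ E - (k + l)) 0 < min s (finrank ℝ E) := by
    rw [max_lt_iff, lt_min_iff, lt_min_iff]
    exact ⟨⟨by linarith, by linarith⟩, hs, hd⟩
  obtain ⟨t, ⟨hlo, hhi⟩, ht⟩ :=
    ((Ioo_infinite hI).sdiff (toFinite {(finrank ℝ E : ℝ) - k, (finrank ℝ E : ℝ) - l})).nonempty
  simp only [mem_insert_iff, mem_singleton_iff, not_or] at ht
  rw [max_lt_iff] at hlo
  rw [lt_min_iff] at hhi
  obtain ⟨K, hK⟩ := exists_twoCenterIntegral_le_of_one_le_of_lt_finrank μ hlo.2.le hhi.2 hk hl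
    hkd hld (fun h => ht.1 (by linarith)) (fun h => ht.2 (by linarith)) hm hmk hml (by linarith)
  exact ⟨K, fun u₁ u₂ hu => (twoCenterIntegral_anti μ hhi.1.le k l u₁ u₂).trans (hK u₁ u₂ hu)⟩

theorem exists_integral_bracket_div_le {s k l : ℝ} (hs : 0 ≤ s) (hk : 0 ≤ k) (hl : 0 ≤ l)
    (hkd : k < finrank ℝ E) (hld : l < finrank ℝ E) (hkls : (finrank ℝ E : ℝ) < k + l + s)
    (hkl : k + l ≠ finrank ℝ E) :
    ∃ C : ℝ, ∀ u₁ u₂ : E,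
      ∫ z, √(1 + ‖z‖ ^ 2) ^ (-s) / (‖z - u₁‖ ^ k * ‖z - u₂‖ ^ l) ∂μ ≤
        C * ‖u₁ - u₂‖⁻¹ ^ max 0 (k + l - finrank ℝ E) := by
  simp_rw [integral_bracket_div_eq_toReal_twoCenterIntegral]
  rcases hkl.lt_or_gt with hlt | hgt
  · obtain ⟨K, hK⟩ := exists_twoCenterIntegral_le_of_lt μ hs hk hl hlt hkls
    refine ⟨K, fun u₁ u₂ => ?_⟩
    rw [max_eq_left (by linarith), rpow_zero]
    exact toReal_le_coe_mul_of_le_coe_mul_ofReal zero_le_one (by simpa using hK u₁ u₂)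
  obtain ⟨K, hK⟩ := exists_twoCenterIntegral_le_of_gt μ hs hk hl hkd hld hgt
  refine ⟨K, fun u₁ u₂ => ?_⟩
  rw [max_eq_right (by linarith)]
  rcases (norm_nonneg (u₁ - u₂)).eq_or_lt with hu | hu
  -- For `u₁ = u₂` both sides vanish: the integral diverges, and `0⁻¹ = 0`.
  · obtain rfl : u₁ = u₂ := sub_eq_zero.mp (norm_eq_zero.mp hu.symm)
    rw [twoCenterIntegral_self_eq_top μ hs hgt.le, ENNReal.toReal_top]
    positivity
  rw [inv_rpow (norm_nonneg _), ← rpow_neg (norm_nonneg _), neg_sub]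
  exact toReal_le_coe_mul_of_le_coe_mul_ofReal (by positivity) (hK u₁ u₂ hu)

theorem exists_integral_bracket_div_le_of_one_le {s k l m : ℝ} (hs : 0 < s) (hk : 0 ≤ k)
    (hl : 0 ≤ l) (hkd : k < finrank ℝ E) (hld : l < finrank ℝ E) (hm : 0 ≤ m) (hmk : m ≤ k)
    (hml : m ≤ l) (hmkl : m + finrank ℝ E < k + l + s) :
    ∃ C : ℝ, ∀ u₁ u₂ : E, 1 ≤ ‖u₁ - u₂‖ →
      ∫ z, √(1 + ‖z‖ ^ 2) ^ (-s) / (‖z - u₁‖ ^ k * ‖z - u₂‖ ^ l) ∂μ ≤ C * ‖u₁ - u₂‖⁻¹ ^ m := by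
  obtain ⟨K, hK⟩ := exists_twoCenterIntegral_le_of_one_le μ hs hk hl hkd hld hm hmk hml hmkl
  refine ⟨K, fun u₁ u₂ hu => ?_⟩
  rw [integral_bracket_div_eq_toReal_twoCenterIntegral, inv_rpow (norm_nonneg _),
    ← rpow_neg (norm_nonneg _)]
  exact toReal_le_coe_mul_of_le_coe_mul_ofReal (by positivity) (hK u₁ u₂ hu)

end Regimes

/-- Weighted convolution estimate: for `0 ≤ k, ℓ < n`, `β > 0`,
`k + ℓ + β ≥ n`, `k + ℓ ≠ n` and any `ε > 0` there is `C`, independent of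
`u₁, u₂ ∈ ℝⁿ`, such that
`∫_{ℝⁿ} ⟨z⟩^{-β-ε} / (|z − u₁|^k |z − u₂|^ℓ) dz` is at most
`C (1/|u₁ − u₂|)^{max(0, k+ℓ−n)}` when `|u₁ − u₂| ≤ 1` and
`C (1/|u₁ − u₂|)^{min(k, ℓ, k+ℓ+β−n)}` when `|u₁ − u₂| > 1`. -/
theorem weighted_convolution_estimate
    (n : ℕ) (hn : 0 < n) (k ℓ β ε : ℝ)
    (hk0 : 0 ≤ k) (hkn : k < n) (hl0 : 0 ≤ ℓ) (hln : ℓ < n)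
    (hβ : 0 < β) (hsum : (n : ℝ) ≤ k + ℓ + β) (hne : k + ℓ ≠ n)
    (hε : 0 < ε) :
    ∃ C : ℝ, ∀ u₁ u₂ : EuclideanSpace ℝ (Fin n),
      (‖u₁ - u₂‖ ≤ 1 →
        (∫ z : EuclideanSpace ℝ (Fin n),
            Real.sqrt (1 + ‖z‖ ^ 2) ^ (-β - ε) / (‖z - u₁‖ ^ k * ‖z - u₂‖ ^ ℓ)) ≤
          C * (‖u₁ - u₂‖⁻¹) ^ (max 0 (k + ℓ - n))) ∧
      (1 < ‖u₁ - u₂‖ →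
        (∫ z : EuclideanSpace ℝ (Fin n),
            Real.sqrt (1 + ‖z‖ ^ 2) ^ (-β - ε) / (‖z - u₁‖ ^ k * ‖z - u₂‖ ^ ℓ)) ≤
          C * (‖u₁ - u₂‖⁻¹) ^ (min k (min ℓ (k + ℓ + β - n)))) := by
  have hd : finrank ℝ (EuclideanSpace ℝ (Fin n)) = n := finrank_euclideanSpace_fin
  have : Nontrivial (EuclideanSpace ℝ (Fin n)) := Module.nontrivial_of_finrank_pos (hd ▸ hn)
  have hm : min k (min ℓ (k + ℓ + β - n)) ≤ k + ℓ + β - n :=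
    (min_le_right _ _).trans (min_le_right _ _)
  obtain ⟨C₁, hnear⟩ := exists_integral_bracket_div_le (volume : Measure (EuclideanSpace ℝ (Fin n)))
    (s := β + ε) (by positivity) hk0 hl0 (by rwa [hd]) (by rwa [hd]) (by rw [hd]; linarith)
    (by rwa [hd])
  obtain ⟨C₂, hfar⟩ := exists_integral_bracket_div_le_of_one_le
    (volume : Measure (EuclideanSpace ℝ (Fin n))) (s := β + ε)
    (m := min k (min ℓ (k + ℓ + β - n))) (by positivity) hk0 hl0
    (by rwa [hd]) (by rwa [hd]) (le_min hk0 (le_min hl0 (by linarith))) (min_le_left _ _)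
    ((min_le_right _ _).trans (min_le_left _ _)) (by rw [hd]; linarith)
  simp only [hd, neg_add'] at hnear hfar
  refine ⟨max C₁ C₂, fun u₁ u₂ => ⟨fun _ => (hnear u₁ u₂).trans ?_,
    fun hu => (hfar u₁ u₂ hu.le).trans ?_⟩⟩
  · exact mul_le_mul_of_nonneg_right (le_max_left _ _) (by positivity)
  · exact mul_le_mul_of_nonneg_right (le_max_right _ _) (by positivity)
end

section
/- Let c : (0,∞) → ℂ satisfy |c^{(k)}(s)| ≤ C 1_{s ≳ 1} |s|^{-3/2−k} for k = 0, 1 (i.e. c is supported where s ≳ 1). Define G̃(λ, p, q) = c(λp) − e^{iλ(p−q)} c(λq) for p ≥ q > 0. Then for any 0 ≤ τ ≤ 1, |G̃(λ, p, q)| ≤ C' (λ|p−q|)^τ ( 1_{λp ≳ 1} (λp)^{-(3−τ)/2} + 1_{λq ≳ 1} (λq)^{-(3−τ)/2} ). -/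
/-!
Put `a = λp`, `b = λq` and `F(s) = e^{-is} c(s)`, so that `|G̃(λ,p,q)| = |F(a) - F(b)|`.
Since `c` and `c'` vanish below `1/4`, `F' = e^{-is}(c' - i c)` is `O(s^{-3/2})` everywhere.
If `b ≥ a/2`, the triangle inequality and the mean value theorem bound `|F(a) - F(b)|` by
`a^{-3/2}` times `1` and `a - b` respectively, and `min 1 (a - b) ≤ (a - b)^τ` interpolates.
If `b < a/2` (and `a ≥ 1/4`, otherwise everything vanishes), then `a - b ≥ 1/8`, so `(a - b)^τ`
is bounded below and the triangle inequality alone suffices.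
-/

open Real Set

lemma min_one_le_rpow {d τ : ℝ} (hd : 0 ≤ d) (hτ0 : 0 ≤ τ) (hτ1 : τ ≤ 1) :
    min 1 d ≤ d ^ τ := by
  rcases le_total d 1 with hd1 | hd1
  · rcases hd.eq_or_lt with rfl | hd0
    · simpa using rpow_nonneg le_rfl τ
    calc min 1 d ≤ d ^ (1 : ℝ) := by rw [rpow_one]; exact min_le_right _ _
      _ ≤ d ^ τ := rpow_le_rpow_of_exponent_ge hd0 hd1 hτ1
  · exact (min_le_left _ _).trans (one_le_rpow hd1 hτ0)

lemma deriv_eq_zero_of_forall_lt_eq_zero {E : Type*} [NormedAddCommGroup E] [NormedSpace ℝ E]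
    {f : ℝ → E} {r s : ℝ} (hf : ∀ x < r, f x = 0) (hs : s < r) : deriv f s = 0 := by
  have hev : f =ᶠ[nhds s] fun _ => 0 := by
    filter_upwards [Iio_mem_nhds hs] with x hx using hf x hx
  rw [hev.deriv_eq, deriv_const]

lemma rpow_neg_five_halves_le {s : ℝ} (hs : 1 / 4 ≤ s) :
    s ^ (-(5 : ℝ) / 2) ≤ 4 * s ^ (-(3 : ℝ) / 2) := by
  have hs0 : 0 < s := by linarith
  have hinv : s⁻¹ ≤ 4 := by
    rw [inv_le_comm₀ hs0 (by norm_num)]; linarith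
  calc s ^ (-(5 : ℝ) / 2) = s⁻¹ * s ^ (-(3 : ℝ) / 2) := by
        rw [← rpow_neg_one s, ← rpow_add hs0]; norm_num
    _ ≤ 4 * s ^ (-(3 : ℝ) / 2) := by gcongr

lemma half_rpow_neg_three_halves_le {a : ℝ} (ha : 0 < a) :
    (a / 2) ^ (-(3 : ℝ) / 2) ≤ 4 * a ^ (-(3 : ℝ) / 2) := by
  have htwo : (1 : ℝ) / 4 ≤ 2 ^ (-(3 : ℝ) / 2) :=
    calc (1 : ℝ) / 4 = 2 ^ (-2 : ℝ) := by norm_num [rpow_neg, rpow_two]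
      _ ≤ 2 ^ (-(3 : ℝ) / 2) := rpow_le_rpow_of_exponent_le (by norm_num) (by norm_num)
  rw [div_rpow ha.le zero_le_two, div_le_iff₀ (by positivity)]
  nlinarith [rpow_nonneg ha.le (-(3 : ℝ) / 2)]

noncomputable def cutoffWeight (τ s : ℝ) : ℝ :=
  if 1 / 4 ≤ s then s ^ (-(3 - τ) / 2) else 0

lemma cutoffWeight_nonneg (τ : ℝ) {s : ℝ} (hs : 0 ≤ s) : 0 ≤ cutoffWeight τ s := by
  unfold cutoffWeight; split_ifs
  exacts [rpow_nonneg hs _, le_rfl]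

lemma rpow_neg_three_halves_le_two_mul_cutoffWeight {τ s : ℝ} (hs : 1 / 4 ≤ s)
    (hτ0 : 0 ≤ τ) (hτ1 : τ ≤ 1) : s ^ (-(3 : ℝ) / 2) ≤ 2 * cutoffWeight τ s := by
  have hs0 : 0 < s := by linarith
  have hhalf : (1 : ℝ) / 2 ≤ s ^ (τ / 2) :=
    calc (1 : ℝ) / 2 = (1 / 4 : ℝ) ^ ((1 : ℝ) / 2) := by
          rw [show (1 / 4 : ℝ) = (1 / 2) ^ (2 : ℝ) by norm_num, ← rpow_mul (by norm_num)]
          norm_num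
      _ ≤ (1 / 4 : ℝ) ^ (τ / 2) :=
          rpow_le_rpow_of_exponent_ge (by norm_num) (by norm_num) (by linarith)
      _ ≤ s ^ (τ / 2) := rpow_le_rpow (by norm_num) hs (by linarith)
  have hsplit : s ^ (-(3 - τ) / 2) = s ^ (-(3 : ℝ) / 2) * s ^ (τ / 2) := by
    rw [← rpow_add hs0]; ring_nf
  rw [cutoffWeight, if_pos hs, hsplit]
  nlinarith [rpow_nonneg hs0.le (-(3 : ℝ) / 2)]

noncomputable def twist (c : ℝ → ℂ) (s : ℝ) : ℂ := Complex.exp (-(Complex.I * s)) * c s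

lemma norm_twist (c : ℝ → ℂ) (s : ℝ) : ‖twist c s‖ = ‖c s‖ := by
  rw [twist, norm_mul, ← mul_neg, ← Complex.ofReal_neg, Complex.norm_exp_I_mul_ofReal, one_mul]

lemma norm_sub_exp_mul_eq_norm_twist_sub (c : ℝ → ℂ) (a b : ℝ) :
    ‖c a - Complex.exp (Complex.I * ((a : ℂ) - b)) * c b‖ = ‖twist c a - twist c b‖ := by
  have hfactor : c a - Complex.exp (Complex.I * ((a : ℂ) - b)) * c b
      = Complex.exp (Complex.I * a) * (twist c a - twist c b) := by
    simp only [twist, mul_sub, ← mul_assoc, ← Complex.exp_add]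
    ring_nf; simp
  rw [hfactor, norm_mul, Complex.norm_exp_I_mul_ofReal, one_mul]

lemma hasDerivAt_twist {c : ℝ → ℂ} {s : ℝ} (hc : DifferentiableAt ℝ c s) :
    HasDerivAt (twist c) (Complex.exp (-(Complex.I * s)) * (deriv c s - Complex.I * c s)) s := by
  have hphase : HasDerivAt (fun x : ℝ => -(Complex.I * x)) (-Complex.I) s := by
    simpa using ((hasDerivAt_id s).ofReal_comp.const_mul Complex.I).fun_neg
  exact (hphase.cexp.mul hc.hasDerivAt).congr_deriv (by ring)

section Estimates

variable {c : ℝ → ℂ} {C : ℝ}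

lemma norm_le_two_mul_cutoffWeight (hsupp : ∀ s : ℝ, s < 1 / 4 → c s = 0)
    (h0 : ∀ s : ℝ, 0 < s → ‖c s‖ ≤ C * s ^ (-(3 : ℝ) / 2)) (hC : 0 ≤ C)
    {τ s : ℝ} (hτ0 : 0 ≤ τ) (hτ1 : τ ≤ 1) (hs : 0 < s) :
    ‖c s‖ ≤ 2 * C * cutoffWeight τ s := by
  rcases lt_or_ge s (1 / 4) with hs4 | hs4
  · rw [hsupp s hs4, norm_zero]
    exact mul_nonneg (by positivity) (cutoffWeight_nonneg τ hs.le)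
  · calc ‖c s‖ ≤ C * s ^ (-(3 : ℝ) / 2) := h0 s hs
      _ ≤ C * (2 * cutoffWeight τ s) := by
          gcongr; exact rpow_neg_three_halves_le_two_mul_cutoffWeight hs4 hτ0 hτ1
      _ = 2 * C * cutoffWeight τ s := by ring

lemma norm_deriv_sub_I_mul_le (hsupp : ∀ s : ℝ, s < 1 / 4 → c s = 0)
    (h0 : ∀ s : ℝ, 0 < s → ‖c s‖ ≤ C * s ^ (-(3 : ℝ) / 2))
    (h1 : ∀ s : ℝ, 0 < s → ‖deriv c s‖ ≤ C * s ^ (-(5 : ℝ) / 2)) (hC : 0 ≤ C)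
    {s : ℝ} (hs : 0 < s) :
    ‖deriv c s - Complex.I * c s‖ ≤ 5 * C * s ^ (-(3 : ℝ) / 2) := by
  rcases lt_or_ge s (1 / 4) with hs4 | hs4
  · rw [deriv_eq_zero_of_forall_lt_eq_zero hsupp hs4, hsupp s hs4]
    simp only [mul_zero, sub_zero, norm_zero]; positivity
  · calc ‖deriv c s - Complex.I * c s‖ ≤ ‖deriv c s‖ + ‖c s‖ := by
          simpa using norm_sub_le (deriv c s) (Complex.I * c s)
      _ ≤ C * (4 * s ^ (-(3 : ℝ) / 2)) + C * s ^ (-(3 : ℝ) / 2) := by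
          gcongr
          · exact (h1 s hs).trans (by gcongr; exact rpow_neg_five_halves_le hs4)
          · exact h0 s hs
      _ = 5 * C * s ^ (-(3 : ℝ) / 2) := by ring

lemma norm_twist_sub_le_of_half_le (hdiff : Differentiable ℝ c)
    (hsupp : ∀ s : ℝ, s < 1 / 4 → c s = 0)
    (h0 : ∀ s : ℝ, 0 < s → ‖c s‖ ≤ C * s ^ (-(3 : ℝ) / 2))
    (h1 : ∀ s : ℝ, 0 < s → ‖deriv c s‖ ≤ C * s ^ (-(5 : ℝ) / 2)) (hC : 0 ≤ C)
    {a b : ℝ} (hb : a / 2 ≤ b) (hba : b ≤ a) (hb0 : 0 < b) :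
    ‖twist c a - twist c b‖ ≤ 5 * C * (a / 2) ^ (-(3 : ℝ) / 2) * min 1 (a - b) := by
  have ha0 : 0 < a / 2 := by linarith
  have hdecay : ∀ s, b ≤ s → C * s ^ (-(3 : ℝ) / 2) ≤ C * (a / 2) ^ (-(3 : ℝ) / 2) :=
    fun s hs => by
      gcongr C * ?_; exact rpow_le_rpow_of_nonpos (by linarith) (by linarith) (by norm_num)
  have hmvt : ‖twist c a - twist c b‖ ≤ 5 * C * (a / 2) ^ (-(3 : ℝ) / 2) * (a - b) := by
    have hderiv : ∀ s ∈ Icc b a,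
        ‖Complex.exp (-(Complex.I * s)) * (deriv c s - Complex.I * c s)‖
          ≤ 5 * C * (a / 2) ^ (-(3 : ℝ) / 2) := fun s hs => by
      rw [norm_mul, ← mul_neg, ← Complex.ofReal_neg, Complex.norm_exp_I_mul_ofReal, one_mul]
      exact (norm_deriv_sub_I_mul_le hsupp h0 h1 hC (hb0.trans_le hs.1)).trans
        (by linarith [hdecay s hs.1])
    simpa [abs_of_nonneg (sub_nonneg.2 hba)] using
      (convex_Icc b a).norm_image_sub_le_of_norm_hasDerivWithin_le
        (fun s _ => (hasDerivAt_twist (hdiff s)).hasDerivWithinAt) hderiv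
        (left_mem_Icc.2 hba) (right_mem_Icc.2 hba)
  have htriangle : ‖twist c a - twist c b‖ ≤ 5 * C * (a / 2) ^ (-(3 : ℝ) / 2) * 1 := by
    calc ‖twist c a - twist c b‖ ≤ ‖c a‖ + ‖c b‖ := by
          simpa only [norm_twist] using norm_sub_le (twist c a) (twist c b)
      _ ≤ C * (a / 2) ^ (-(3 : ℝ) / 2) + C * (a / 2) ^ (-(3 : ℝ) / 2) :=
          add_le_add ((h0 a (hb0.trans_le hba)).trans (hdecay a hba))
            ((h0 b hb0).trans (hdecay b le_rfl))
      _ ≤ 5 * C * (a / 2) ^ (-(3 : ℝ) / 2) * 1 := by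
          nlinarith [rpow_nonneg ha0.le (-(3 : ℝ) / 2)]
  rw [mul_min_of_nonneg _ _ (by nlinarith [rpow_nonneg ha0.le (-(3 : ℝ) / 2)])]
  exact le_min htriangle hmvt

lemma norm_twist_sub_le (hdiff : Differentiable ℝ c)
    (hsupp : ∀ s : ℝ, s < 1 / 4 → c s = 0)
    (h0 : ∀ s : ℝ, 0 < s → ‖c s‖ ≤ C * s ^ (-(3 : ℝ) / 2))
    (h1 : ∀ s : ℝ, 0 < s → ‖deriv c s‖ ≤ C * s ^ (-(5 : ℝ) / 2)) (hC : 0 ≤ C)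
    {τ a b : ℝ} (hτ0 : 0 ≤ τ) (hτ1 : τ ≤ 1) (hb0 : 0 < b) (hba : b ≤ a) :
    ‖twist c a - twist c b‖ ≤
      40 * C * (a - b) ^ τ * (cutoffWeight τ a + cutoffWeight τ b) := by
  have hd : 0 ≤ a - b := sub_nonneg.2 hba
  have hwa := cutoffWeight_nonneg τ (hb0.le.trans hba)
  have hwb := cutoffWeight_nonneg τ hb0.le
  rcases lt_or_ge a (1 / 4) with ha | ha
  · rw [twist, twist, hsupp a ha, hsupp b (hba.trans_lt ha), mul_zero, mul_zero, sub_zero,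
      norm_zero]
    positivity
  rcases lt_or_ge b (a / 2) with hfar | hclose
  · have hdτ8 : 1 / 8 ≤ (a - b) ^ τ :=
      (le_min (by norm_num) (by linarith)).trans (min_one_le_rpow hd hτ0 hτ1)
    calc ‖twist c a - twist c b‖ ≤ ‖c a‖ + ‖c b‖ := by
          simpa only [norm_twist] using norm_sub_le (twist c a) (twist c b)
      _ ≤ 2 * C * cutoffWeight τ a + 2 * C * cutoffWeight τ b :=
          add_le_add (norm_le_two_mul_cutoffWeight hsupp h0 hC hτ0 hτ1 (hb0.trans_le hba))
            (norm_le_two_mul_cutoffWeight hsupp h0 hC hτ0 hτ1 hb0)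
      _ ≤ 40 * C * (a - b) ^ τ * (cutoffWeight τ a + cutoffWeight τ b) := by
          nlinarith [mul_nonneg hC (add_nonneg hwa hwb)]
  · calc ‖twist c a - twist c b‖ ≤ 5 * C * (a / 2) ^ (-(3 : ℝ) / 2) * min 1 (a - b) :=
          norm_twist_sub_le_of_half_le hdiff hsupp h0 h1 hC hclose hba hb0
      _ ≤ 5 * C * (4 * (2 * cutoffWeight τ a)) * (a - b) ^ τ := by
          gcongr
          · exact (half_rpow_neg_three_halves_le (hb0.trans_le hba)).trans
              (by gcongr; exact rpow_neg_three_halves_le_two_mul_cutoffWeight ha hτ0 hτ1)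
          · exact min_one_le_rpow hd hτ0 hτ1
      _ ≤ 40 * C * (a - b) ^ τ * (cutoffWeight τ a + cutoffWeight τ b) := by
          nlinarith [mul_nonneg (mul_nonneg hC (rpow_nonneg hd τ)) hwb]

end Estimates

/-- Let `c : (0,∞) → ℂ` be differentiable, vanish for `s < 1/4`, and satisfy
`|c(s)| ≤ C s^{-3/2}`, `|c'(s)| ≤ C s^{-5/2}` for `s > 0`.  With
`G̃(λ, p, q) = c(λp) − e^{iλ(p−q)} c(λq)` for `p ≥ q > 0`, one has for any `0 ≤ τ ≤ 1`:
`|G̃(λ,p,q)| ≤ C' (λ|p−q|)^τ (1_{λp ≳ 1}(λp)^{-(3−τ)/2} + 1_{λq ≳ 1}(λq)^{-(3−τ)/2})`. -/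
theorem high_energy_difference_estimate
    (c : ℝ → ℂ) (C : ℝ)
    (hdiff : Differentiable ℝ c)
    (hsupp : ∀ s : ℝ, s < 1 / 4 → c s = 0)
    (h0 : ∀ s : ℝ, 0 < s → ‖c s‖ ≤ C * s ^ (-(3 : ℝ) / 2))
    (h1 : ∀ s : ℝ, 0 < s → ‖deriv c s‖ ≤ C * s ^ (-(5 : ℝ) / 2)) :
    ∃ C' : ℝ, ∀ τ : ℝ, 0 ≤ τ → τ ≤ 1 → ∀ lam p q : ℝ, 0 < lam → 0 < q → q ≤ p →
      ‖c (lam * p) - Complex.exp (Complex.I * lam * (p - q)) * c (lam * q)‖ ≤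
        C' * (lam * |p - q|) ^ τ *
          ((if 1 / 4 ≤ lam * p then (lam * p) ^ (-(3 - τ) / 2) else 0) +
           (if 1 / 4 ≤ lam * q then (lam * q) ^ (-(3 - τ) / 2) else 0)) := by
  have hC : 0 ≤ C := by simpa using (norm_nonneg _).trans (h0 1 one_pos)
  refine ⟨40 * C, fun τ hτ0 hτ1 lam p q hlam hq hqp => ?_⟩
  have hphase :
      Complex.I * lam * (p - q) = Complex.I * (((lam * p : ℝ) : ℂ) - (lam * q : ℝ)) := by
    push_cast; ring
  have hdist : lam * |p - q| = lam * p - lam * q := by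
    rw [abs_of_nonneg (sub_nonneg.2 hqp)]; ring
  rw [hphase, norm_sub_exp_mul_eq_norm_twist_sub, hdist]
  exact norm_twist_sub_le hdiff hsupp h0 h1 hC hτ0 hτ1 (mul_pos hlam hq)
    (mul_le_mul_of_nonneg_left hqp hlam.le)
end
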